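/- arXiv:1904.10382 — 14 statements merged into one kernel-verified Lean document; each statement's English description precedes it below -/
import Mathlib

section
/- Let f : R → S be a homomorphism of commutative rings making S a finitely generated R-module. Consider the extension-of-scalars functor f* := S ⊗_R − and the coextension-of-scalars functor f^! := Hom_R(S, −) from the category of R-modules to the category of S-modules. Then the map sending a natural transformation σ : f* ⟶ f^! to the element σ_R(1 ⊗ 1) ∈ Hom_R(S,R) is a bijection between the set of natural transformations f* ⟶ f^! and Hom_R(S,R); its inverse sends T ∈ Hom_R(S,R) to the natural transformation σ with σ_M(s ⊗ m)(x) := T(x·s)·m for every R-module M. -/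
universe u

/-- Multiplication on the source: `(coextSMul s μ) x = μ (x * s)`. -/
def coextSMul {R S M : Type*} [CommRing R] [CommRing S] [Algebra R S]
    [AddCommGroup M] [Module R M] (s : S) (μ : S →ₗ[R] M) : S →ₗ[R] M where
  toFun x := μ (x * s)
  map_add' x y := by show μ ((x + y) * s) = μ (x * s) + μ (y * s); rw [add_mul, map_add]
  map_smul' r x := by show μ ((r • x) * s) = r • μ (x * s); rw [smul_mul_assoc, map_smul]

/-- The coextension-of-scalars module structure on `S →ₗ[R] M`: `(s • μ) x = μ (x * s)`. -/
instance coextModule {R S M : Type*} [CommRing R] [CommRing S] [Algebra R S]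
    [AddCommGroup M] [Module R M] : Module S (S →ₗ[R] M) where
  smul := coextSMul
  one_smul μ := by ext x; show μ (x * 1) = μ x; rw [mul_one]
  mul_smul s t μ := by ext x; show μ (x * (s * t)) = μ ((x * s) * t); rw [mul_assoc]
  smul_zero s := by ext x; show (0 : S →ₗ[R] M) (x * s) = 0; simp
  smul_add s μ ν := by
    ext x; show (μ + ν) (x * s) = μ (x * s) + ν (x * s); simp
  add_smul s t μ := by ext x; show μ (x * (s + t)) = μ (x * s) + μ (x * t); rw [mul_add, map_add]
  zero_smul μ := by ext x; show μ (x * 0) = 0; rw [mul_zero, map_zero]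

instance coextSMulComm {R S M : Type*} [CommRing R] [CommRing S] [Algebra R S]
    [AddCommGroup M] [Module R M] : SMulCommClass S S (S →ₗ[R] M) := by
  constructor
  intro s t μ
  ext x
  show μ ((x * s) * t) = μ ((x * t) * s)
  rw [mul_right_comm]

/-- A natural transformation `f^* ⟶ f^!` between extension and coextension of scalars
along `R → S`, given by its components on every `R`-module `M` (in a fixed universe). -/
structure NatTransEx (R S : Type u) [CommRing R] [CommRing S] [Algebra R S] :
    Type (u + 1) where
  app : ∀ (M : Type u) [AddCommGroup M] [Module R M],
    TensorProduct R S M →ₗ[S] (S →ₗ[R] M)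
  naturality : ∀ (M N : Type u) [AddCommGroup M] [Module R M] [AddCommGroup N] [Module R N]
      (g : M →ₗ[R] N) (x : TensorProduct R S M),
    app N (LinearMap.baseChange S g x) = g ∘ₗ app M x



def omegaInner {R S M : Type u} [CommRing R] [CommRing S] [Algebra R S]
    [AddCommGroup M] [Module R M] (T : S →ₗ[R] R) (s : S) (m : M) : S →ₗ[R] M where
  toFun x := T (x * s) • m
  map_add' x y := by simp [add_mul, add_smul]
  map_smul' r x := by simp [smul_mul_assoc, smul_smul]

def omegaBilin {R S M : Type u} [CommRing R] [CommRing S] [Algebra R S]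
    [AddCommGroup M] [Module R M] (T : S →ₗ[R] R) : S →ₗ[R] M →ₗ[R] (S →ₗ[R] M) where
  toFun s :=
    { toFun := fun m => omegaInner T s m
      map_add' := fun m m' => by ext x; simp [omegaInner, smul_add]
      map_smul' := fun r m => by
        ext x
        show T (x * s) • (r • m) = r • (T (x * s) • m)
        rw [smul_comm] }
  map_add' s s' := by ext m x; simp [omegaInner, mul_add, add_smul]
  map_smul' r s := by
    ext m x
    show T (x * (r • s)) • m = r • (T (x * s) • m)
    rw [mul_smul_comm, map_smul, smul_assoc]

noncomputable def omegaApp {R S : Type u} [CommRing R] [CommRing S] [Algebra R S]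
    (T : S →ₗ[R] R) (M : Type u) [AddCommGroup M] [Module R M] :
    TensorProduct R S M →ₗ[S] (S →ₗ[R] M) where
  toFun := TensorProduct.lift (omegaBilin T)
  map_add' a b := by simp
  map_smul' s z := by
    show TensorProduct.lift (omegaBilin T) (s • z) = s • TensorProduct.lift (omegaBilin T) z
    induction z using TensorProduct.induction_on with
    | zero => simp
    | tmul t m =>
        rw [TensorProduct.smul_tmul']
        ext x
        show T (x * (s * t)) • m = T ((x * s) * t) • m
        rw [mul_assoc]
    | add a b ha hb => rw [smul_add, map_add, map_add, ha, hb, smul_add]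

lemma omegaApp_tmul {R S : Type u} [CommRing R] [CommRing S] [Algebra R S]
    (T : S →ₗ[R] R) (M : Type u) [AddCommGroup M] [Module R M] (s : S) (m : M) (x : S) :
    omegaApp T M (s ⊗ₜ[R] m) x = T (x * s) • m := rfl

noncomputable def fromOmega {R S : Type u} [CommRing R] [CommRing S] [Algebra R S]
    (T : S →ₗ[R] R) : NatTransEx R S where
  app M _ _ := omegaApp T M
  naturality M N _ _ _ _ g x := by
    induction x using TensorProduct.induction_on with
    | zero => simp
    | tmul s m =>
        ext y
        show T (y * s) • g m = g (T (y * s) • m)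
        rw [map_smul]
    | add a b ha hb =>
        simp only [map_add]
        rw [ha, hb]
        ext y
        simp

lemma natTransEx_ext {R S : Type u} [CommRing R] [CommRing S] [Algebra R S]
    (σ τ : NatTransEx R S)
    (h : ∀ (M : Type u) [AddCommGroup M] [Module R M] (s : S) (m : M) (x : S),
      σ.app M (s ⊗ₜ[R] m) x = τ.app M (s ⊗ₜ[R] m) x) : σ = τ := by
  cases σ with
  | mk a na =>
  cases τ with
  | mk b nb =>
  have : a = b := by
    funext M i j
    refine LinearMap.ext fun z => ?_
    induction z using TensorProduct.induction_on with
    | zero => simp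
    | tmul s m => exact LinearMap.ext fun x => h M s m x
    | add u v hu hv => simp only [map_add, hu, hv]
  subst this
  rfl

lemma app_tmul_eq {R S : Type u} [CommRing R] [CommRing S] [Algebra R S]
    (σ : NatTransEx R S) (M : Type u) [AddCommGroup M] [Module R M] (s : S) (m : M) (x : S) :
    σ.app M (s ⊗ₜ[R] m) x = σ.app R ((1 : S) ⊗ₜ[R] (1 : R)) (x * s) • m := by
  have h1 : (s ⊗ₜ[R] m : TensorProduct R S M)
      = LinearMap.baseChange S (LinearMap.toSpanSingleton R M m) (s ⊗ₜ[R] (1 : R)) := by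
    simp [LinearMap.baseChange_tmul]
  rw [h1, σ.naturality]
  have h2 : (s ⊗ₜ[R] (1 : R) : TensorProduct R S R) = s • ((1 : S) ⊗ₜ[R] (1 : R)) := by
    rw [TensorProduct.smul_tmul']; simp
  rw [h2, map_smul]
  rfl

/-- Natural transformations `f^* ⟶ f^!` correspond bijectively to elements of
`ω_{S/R} = Hom_R(S,R)` via `σ ↦ σ_R(1 ⊗ 1)`, with inverse
`T ↦ (σ_M : s ⊗ m ↦ (x ↦ T(x·s)·m))`. -/
theorem natTrans_extend_coextend_equiv_relativeCanonical
    (R S : Type u) [CommRing R] [CommRing S] [Algebra R S] [Module.Finite R S] :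
    ∃ E : NatTransEx R S ≃ (S →ₗ[R] R),
      (∀ σ : NatTransEx R S, E σ = σ.app R ((1 : S) ⊗ₜ[R] (1 : R))) ∧
      (∀ (T : S →ₗ[R] R) (M : Type u) [AddCommGroup M] [Module R M] (s : S) (m : M) (x : S),
        (E.symm T).app M (s ⊗ₜ[R] m) x = T (x * s) • m) := by
  refine ⟨{ toFun := fun σ => σ.app R ((1 : S) ⊗ₜ[R] (1 : R))
            invFun := fromOmega
            left_inv := fun σ => ?_
            right_inv := fun T => ?_ }, fun σ => rfl, fun T M _ _ s m x => rfl⟩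
  · apply natTransEx_ext
    intro M _ _ s m x
    rw [app_tmul_eq σ]
    rfl
  · ext x
    show T (x * 1) • (1 : R) = T x
    rw [mul_one, smul_eq_mul, mul_one]
end

section
/- Let f : R → S be a homomorphism of commutative rings making S a finitely generated R-module, let σ : f* ⟶ f^! be a natural transformation from extension of scalars f* = S ⊗_R − to coextension of scalars f^! = Hom_R(S,−), and set T := σ_R(1 ⊗ 1) ∈ Hom_R(S,R). Then the composite natural transformation id ⟶ f_*f* ⟶ f_*f^! ⟶ id — given on an R-module M by first the unit m ↦ 1 ⊗ m, then σ_M, then the trace μ ↦ μ(1) — is the identity if and only if T splits f, i.e. T(f(r)) = r for all r ∈ R. -/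
universe u

/-- The composite `id ⟶ f_*f^* ⟶ f_*f^! ⟶ id`, `m ↦ σ_M(1 ⊗ m)(1)`, is the identity
if and only if `T = σ_R(1 ⊗ 1)` splits `f`, i.e. `T(f(r)) = r` for all `r`. -/
theorem natTrans_composite_identity_iff_splitting
    (R S : Type u) [CommRing R] [CommRing S] [Algebra R S] [Module.Finite R S]
    (σ : NatTransEx R S) :
    (∀ (M : Type u) [AddCommGroup M] [Module R M] (m : M),
        σ.app M ((1 : S) ⊗ₜ[R] m) 1 = m) ↔
      (∀ r : R, σ.app R ((1 : S) ⊗ₜ[R] (1 : R)) (algebraMap R S r) = r) := by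
  constructor
  · intro h r
    have key : (1 : S) ⊗ₜ[R] r = (algebraMap R S r) • ((1 : S) ⊗ₜ[R] (1 : R)) := by
      rw [TensorProduct.smul_tmul', smul_eq_mul, mul_one]
      rw [Algebra.algebraMap_eq_smul_one, TensorProduct.smul_tmul, smul_eq_mul, mul_one]
    have h1 := h R r
    rw [key, map_smul] at h1
    have h2 : ((algebraMap R S r) • σ.app R ((1 : S) ⊗ₜ[R] (1 : R))) 1
        = σ.app R ((1 : S) ⊗ₜ[R] (1 : R)) (1 * algebraMap R S r) := rfl
    rw [h2, one_mul] at h1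
    exact h1
  · intro h M _ _ m
    have h1 := h 1
    rw [map_one] at h1
    let g : R →ₗ[R] M :=
      { toFun := fun r => r • m
        map_add' := fun a b => add_smul a b m
        map_smul' := fun a b => mul_smul a b m }
    have hn := σ.naturality R M g ((1 : S) ⊗ₜ[R] (1 : R))
    have hb : LinearMap.baseChange S g ((1 : S) ⊗ₜ[R] (1 : R)) = (1 : S) ⊗ₜ[R] m := by
      simp [g, LinearMap.baseChange_tmul]
    rw [hb] at hn
    have := congrArg (fun μ : S →ₗ[R] M => μ 1) hn
    simp only [LinearMap.comp_apply] at this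
    rw [this, h1]
    exact one_smul R m
end

section
/- Fix a prime p. Let R ⊆ S be a finite extension of commutative rings of characteristic p, and let T : S → R be an R-linear map such that the map σ : S → Hom_R(S,R), σ(s)(x) := T(s·x), is bijective. Then for every e ≥ 1 and every φ ∈ C_{e,R} there exists a unique φ^⊤ ∈ C_{e,S} satisfying T(φ^⊤(s)·s') = φ(T(s·s'^{p^e})) for all s, s' ∈ S. Moreover this φ^⊤ satisfies T(φ^⊤(s)) = φ(T(s)) for all s ∈ S, and such a φ^⊤ is already unique (if it exists) under the weaker assumption that σ is merely injective. -/
/-- `p^e`-semilinear additive maps ("Cartier maps"):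
`φ (a^{p^e} • x) = a • φ x`. -/
def IsCartierMap (p : ℕ) (A : Type*) [CommSemiring A] {X Y : Type*} [AddCommMonoid X]
    [AddCommMonoid Y] [Module A X] [Module A Y] (e : ℕ) (φ : X →+ Y) : Prop :=
  ∀ (a : A) (x : X), φ (a ^ p ^ e • x) = a • φ x

/-- The `S`-linear map `σ : S → Hom_R(S,R)`, `σ(s)(x) = T(s·x)`, as an `R`-bilinear map. -/
noncomputable def sigmaT (R S : Type*) [CommRing R] [CommRing S] [Algebra R S]
    (T : S →ₗ[R] R) : S →ₗ[R] (S →ₗ[R] R) :=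
  LinearMap.mk₂ R (fun s x => T (s * x))
    (fun s s' x => by show T ((s + s') * x) = T (s * x) + T (s' * x); rw [add_mul, map_add])
    (fun r s x => by show T ((r • s) * x) = r • T (s * x); rw [smul_mul_assoc, map_smul])
    (fun s x x' => by show T (s * (x + x')) = T (s * x) + T (s * x'); rw [mul_add, map_add])
    (fun r s x => by show T (s * (r • x)) = r • T (s * x); rw [mul_smul_comm, map_smul])

/-- `ψ` is a `T`-transpose of `φ`: `T (ψ s * s') = φ (T (s * s'^{p^e}))`. -/
def IsTranspose (p : ℕ) {R S : Type*} [CommRing R] [CommRing S] [Algebra R S]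
    (T : S →ₗ[R] R) (e : ℕ) (φ : R →+ R) (ψ : S →+ S) : Prop :=
  ∀ s s' : S, T (ψ s * s') = φ (T (s * s' ^ p ^ e))

/-!
Since `σ` is injective, an element `y ∈ S` is determined by the functional `x ↦ T (y * x)`;
so a transpose is determined by the defining identity, and it inherits `p^e`-semilinearity from
that identity via `s * (a * x)^{p^e} = a^{p^e} * s * x^{p^e}`. For existence, the functional
`x ↦ φ (T (s * x^{p^e}))` is `R`-linear (additivity of `x ↦ x^{p^e}` in characteristic `p`,
semilinearity of `φ`), and `φ^⊤ s` is its preimage under the bijection `σ`.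
-/

section Transpose

variable {p : ℕ} {R S : Type*} [CommRing R] [CommRing S] [Algebra R S]
  {T : S →ₗ[R] R} {e : ℕ} {φ : R →+ R}

theorem eq_of_sigmaT_injective (hσ : Function.Injective (sigmaT R S T)) {y y' : S}
    (h : ∀ x, T (y * x) = T (y' * x)) : y = y' :=
  hσ (LinearMap.ext h)

namespace IsTranspose

variable {ψ : S →+ S}

theorem map_apply (hψ : IsTranspose p T e φ ψ) (s : S) : T (ψ s) = φ (T s) := by
  simpa using hψ s 1

theorem unique (hσ : Function.Injective (sigmaT R S T)) {ψ₁ ψ₂ : S →+ S}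
    (h₁ : IsTranspose p T e φ ψ₁) (h₂ : IsTranspose p T e φ ψ₂) : ψ₁ = ψ₂ :=
  AddMonoidHom.ext fun s => eq_of_sigmaT_injective hσ fun x => by rw [h₁, h₂]

theorem isCartierMap (hσ : Function.Injective (sigmaT R S T)) (hψ : IsTranspose p T e φ ψ) :
    IsCartierMap p S e ψ := fun a s =>
  eq_of_sigmaT_injective hσ fun x => calc
    T (ψ (a ^ p ^ e • s) * x) = φ (T (s * (a * x) ^ p ^ e)) := by
      rw [hψ, smul_eq_mul, mul_pow]; ring_nf
    _ = T ((a • ψ s) * x) := by rw [← hψ, smul_eq_mul, mul_left_comm, mul_assoc]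

end IsTranspose

variable (T) in
def transposeFunctional [ExpChar S p] (hφ : IsCartierMap p R e φ) : S →+ (S →ₗ[R] R) where
  toFun s :=
    { toFun := fun x => φ (T (s * x ^ p ^ e))
      map_add' := fun x y => by rw [add_pow_expChar_pow, mul_add, map_add, map_add]
      map_smul' := fun r x => by
        rw [smul_pow, mul_smul_comm, map_smul]
        exact hφ r _ }
  map_zero' := by ext; simp
  map_add' s t := by ext; simp [add_mul]

variable (T) in
theorem transposeFunctional_apply [ExpChar S p] (hφ : IsCartierMap p R e φ) (s x : S) :
    transposeFunctional T hφ s x = φ (T (s * x ^ p ^ e)) := rfl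

theorem exists_isTranspose [ExpChar S p] (hφ : IsCartierMap p R e φ)
    (hσ : Function.Bijective (sigmaT R S T)) : ∃ ψ : S →+ S, IsTranspose p T e φ ψ := by
  let σ := LinearEquiv.ofBijective (sigmaT R S T) hσ
  refine ⟨σ.symm.toLinearMap.toAddMonoidHom.comp (transposeFunctional T hφ), fun s x => ?_⟩
  rw [← transposeFunctional_apply T hφ, ← σ.apply_symm_apply (transposeFunctional T hφ s)]
  rfl

end Transpose

theorem exists_unique_transpose_general
    (p : ℕ) (hp : p.Prime) (R S : Type*) [CommRing R] [CommRing S]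
    [CharP S p] [Algebra R S]
    (T : S →ₗ[R] R)
    (e : ℕ) (φ : R →+ R) (hφ : IsCartierMap p R e φ) :
    (Function.Bijective ⇑(sigmaT R S T) →
      ((∃! ψ : S →+ S, IsCartierMap p S e ψ ∧ IsTranspose p T e φ ψ) ∧
        ∀ ψ : S →+ S, IsCartierMap p S e ψ → IsTranspose p T e φ ψ →
          ∀ s : S, T (ψ s) = φ (T s))) ∧
    (Function.Injective ⇑(sigmaT R S T) →
      ∀ ψ₁ ψ₂ : S →+ S, IsCartierMap p S e ψ₁ → IsTranspose p T e φ ψ₁ →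
        IsCartierMap p S e ψ₂ → IsTranspose p T e φ ψ₂ → ψ₁ = ψ₂) := by
  have : ExpChar S p := .prime hp
  refine ⟨fun hσ => ⟨?_, fun ψ _ hψ => hψ.map_apply⟩,
    fun hσ ψ₁ ψ₂ _ h₁ _ h₂ => h₁.unique hσ h₂⟩
  obtain ⟨ψ, hψ⟩ := exists_isTranspose hφ hσ
  exact ⟨ψ, ⟨hψ.isCartierMap hσ.injective, hψ⟩, fun ψ' ⟨_, hψ'⟩ => hψ'.unique hσ.injective hψ⟩

/-- Existence and uniqueness of the `T`-transpose `φ^⊤` of a Cartier map `φ ∈ C_{e,R}`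
along a finite extension `R ⊆ S`, when `σ : S → Hom_R(S,R)` is bijective; moreover
`T(φ^⊤(s)) = φ(T(s))`, and uniqueness already holds when `σ` is merely injective. -/
theorem exists_unique_transpose
    (p : ℕ) (hp : p.Prime) (R S : Type*) [CommRing R] [CommRing S]
    [CharP R p] [CharP S p] [Algebra R S] [Module.Finite R S]
    (hinj : Function.Injective (algebraMap R S)) (T : S →ₗ[R] R)
    (e : ℕ) (he : 1 ≤ e) (φ : R →+ R) (hφ : IsCartierMap p R e φ) :
    (Function.Bijective ⇑(sigmaT R S T) →
      ((∃! ψ : S →+ S, IsCartierMap p S e ψ ∧ IsTranspose p T e φ ψ) ∧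
        ∀ ψ : S →+ S, IsCartierMap p S e ψ → IsTranspose p T e φ ψ →
          ∀ s : S, T (ψ s) = φ (T s))) ∧
    (Function.Injective ⇑(sigmaT R S T) →
      ∀ ψ₁ ψ₂ : S →+ S, IsCartierMap p S e ψ₁ → IsTranspose p T e φ ψ₁ →
        IsCartierMap p S e ψ₂ → IsTranspose p T e φ ψ₂ → ψ₁ = ψ₂) :=
  exists_unique_transpose_general p hp R S T e φ hφ
end

section
/- Fix a prime p. Let (R,m) ⊆ (S,n) be a finite extension of noetherian local domains of characteristic p with n ∩ R = m. Let T : S → R be an R-linear map such that σ is injective and a generic isomorphism, T is surjective, and T(n) ⊆ m. Let C be a Cartier subalgebra of C_R and suppose that every φ ∈ C_e (e ≥ 1) has a chosen T-transpose φ^⊤. Then sp(S, f*C) ∩ R = sp(R, C). -/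
/-- A Cartier structure (Cartier subalgebra of `C_X`) on an `A`-module `X`. -/
structure CartierStructure (p : ℕ) (A : Type*) [CommRing A] (X : Type*) [AddCommGroup X]
    [Module A X] where
  carrier : ℕ → Set (X →+ X)
  cartier_mem : ∀ e, 1 ≤ e → ∀ φ ∈ carrier e, IsCartierMap p A e φ
  add_mem : ∀ e, 1 ≤ e → ∀ φ ∈ carrier e, ∀ ψ ∈ carrier e, φ + ψ ∈ carrier e
  smul_mem : ∀ e, 1 ≤ e → ∀ (a : A), ∀ φ ∈ carrier e,
    (DistribMulAction.toAddMonoidHom X a).comp φ ∈ carrier e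
  mul_mem : ∀ e, 1 ≤ e → ∀ (a : A), ∀ φ ∈ carrier e,
    φ.comp (DistribMulAction.toAddMonoidHom X a) ∈ carrier e
  comp_mem : ∀ e d, 1 ≤ e → 1 ≤ d → ∀ φ ∈ carrier e, ∀ ψ ∈ carrier d,
    φ.comp ψ ∈ carrier (e + d)

/-- The degree-`e` part of the pulled back Cartier algebra `f^*C`:
finite sums `Σ φᵢ^⊤ · sᵢ` where `(χ · s) x = χ (s * x)`. -/
def pushFam {R S : Type*} [CommRing R] [CommRing S] (D : ℕ → Set (R →+ R))
    (tr : ℕ → (R →+ R) → (S →+ S)) : ℕ → Set (S →+ S) := fun e =>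
  { ψ | ∃ (k : ℕ) (φ : Fin k → R →+ R) (s : Fin k → S), (∀ i, φ i ∈ D e) ∧
      ψ = ∑ i, (tr e (φ i)).comp (AddMonoidHom.mulLeft (s i)) }

/-- The splitting prime of a family of Cartier linear maps on a local ring. -/
def spSet (A : Type*) [CommRing A] [IsLocalRing A] (D : ℕ → Set (A →+ A)) : Set A :=
  { a | ∀ e, 1 ≤ e → ∀ φ ∈ D e, φ a ∈ IsLocalRing.maximalIdeal A }

/-- **Transformation rule for splitting primes** under a finite local extension:
`sp(S, f^*C) ∩ R = sp(R, C)`. -/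
theorem splittingPrime_comap
    (p : ℕ) (hp : p.Prime) (R S : Type*) [CommRing R] [CommRing S]
    [IsDomain R] [IsDomain S] [IsNoetherianRing R] [IsNoetherianRing S]
    [IsLocalRing R] [IsLocalRing S] [CharP R p] [CharP S p]
    [Algebra R S] [Module.Finite R S]
    (hinj : Function.Injective (algebraMap R S))
    (hloc : (IsLocalRing.maximalIdeal S).comap (algebraMap R S) = IsLocalRing.maximalIdeal R)
    (T : S →ₗ[R] R)
    (hσinj : Function.Injective ⇑(sigmaT R S T))
    (K : Type*) [Field K] [Algebra R K] [IsFractionRing R K]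
    (hσgen : Function.Bijective ⇑(LinearMap.baseChange K (sigmaT R S T)))
    (hTsurj : Function.Surjective ⇑T)
    (hTn : ∀ s ∈ IsLocalRing.maximalIdeal S, T s ∈ IsLocalRing.maximalIdeal R)
    (C : CartierStructure p R R) (tr : ℕ → (R →+ R) → (S →+ S))
    (htr : ∀ e, 1 ≤ e → ∀ φ ∈ C.carrier e,
      IsCartierMap p S e (tr e φ) ∧ IsTranspose p T e φ (tr e φ)) :
    ⇑(algebraMap R S) ⁻¹' spSet S (pushFam C.carrier tr) = spSet R C.carrier := by
  ext r
  simp only [Set.mem_preimage]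
  constructor
  · -- f r ∈ sp(S, f*C) → r ∈ sp(R, C)
    intro h e he φ hφ
    obtain ⟨s₀, hs₀⟩ := hTsurj 1
    have hψ : (tr e φ).comp (AddMonoidHom.mulLeft s₀) ∈ pushFam C.carrier tr e :=
      ⟨1, fun _ => φ, fun _ => s₀, fun _ => hφ, by simp⟩
    have hmem := h e he _ hψ
    have h2 := hTn _ hmem
    have htrans := (htr e he φ hφ).2 (s₀ * algebraMap R S r) 1
    simp only [one_pow, mul_one] at htrans
    have hval : T (s₀ * algebraMap R S r) = r := by
      rw [mul_comm, ← Algebra.smul_def, map_smul, hs₀, smul_eq_mul, mul_one]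
    rw [hval] at htrans
    change T ((tr e φ) (s₀ * algebraMap R S r)) ∈ _ at h2
    rwa [htrans] at h2
  · -- r ∈ sp(R, C) → f r ∈ sp(S, f*C)
    intro h e he ψ hψ
    obtain ⟨k, φ, s, hφ, rfl⟩ := hψ
    set fr := algebraMap R S r with hfr
    by_contra hn
    have hu : IsUnit ((∑ i, (tr e (φ i)).comp (AddMonoidHom.mulLeft (s i))) fr) := by
      by_contra hu
      exact hn (IsLocalRing.mem_maximalIdeal _ |>.mpr hu)
    obtain ⟨u, hu⟩ := hu
    have key : ∀ z : S, T ((∑ i, (tr e (φ i)).comp (AddMonoidHom.mulLeft (s i))) fr * z)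
        ∈ IsLocalRing.maximalIdeal R := by
      intro z
      rw [AddMonoidHom.finset_sum_apply, Finset.sum_mul, map_sum]
      apply Ideal.sum_mem
      intro i _
      show T ((tr e (φ i)) (s i * fr) * z) ∈ _
      rw [(htr e he (φ i) (hφ i)).2 (s i * fr) z]
      have : s i * fr * z ^ p ^ e = r • (s i * z ^ p ^ e) := by
        rw [Algebra.smul_def, ← hfr]; ring
      rw [this, map_smul, smul_eq_mul]
      have := h e he _ (C.mul_mem e he (T (s i * z ^ p ^ e)) (φ i) (hφ i))
      rw [AddMonoidHom.comp_apply] at this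
      simpa [mul_comm] using this
    obtain ⟨z₀, hz₀⟩ := hTsurj 1
    have := key (↑u⁻¹ * z₀)
    rw [← hu, ← mul_assoc, u.mul_inv, one_mul, hz₀] at this
    exact ((IsLocalRing.mem_maximalIdeal _).mp this) isUnit_one
end

section
/- Fix a prime p. Let (R,m) ⊆ (S,n) be a finite extension of noetherian local domains of characteristic p with n ∩ R = m. Let T : S → R be an R-linear map such that σ is injective and a generic isomorphism, T is surjective, and T(n) ⊆ m. Let C be a Cartier subalgebra of C_R and suppose that every φ ∈ C_e (e ≥ 1) has a chosen T-transpose φ^⊤. Then sp(S, f*C) = { s ∈ S : T(s·x) ∈ sp(R,C) for all x ∈ S }. -/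
/-- The splitting prime upstairs is cut out by `T`:
`sp(S, f^*C) = { s ∈ S : T(s·x) ∈ sp(R,C) for all x ∈ S }`. -/
theorem splittingPrime_eq_colon
    (p : ℕ) (hp : p.Prime) (R S : Type*) [CommRing R] [CommRing S]
    [IsDomain R] [IsDomain S] [IsNoetherianRing R] [IsNoetherianRing S]
    [IsLocalRing R] [IsLocalRing S] [CharP R p] [CharP S p]
    [Algebra R S] [Module.Finite R S]
    (hinj : Function.Injective (algebraMap R S))
    (hloc : (IsLocalRing.maximalIdeal S).comap (algebraMap R S) = IsLocalRing.maximalIdeal R)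
    (T : S →ₗ[R] R)
    (hσinj : Function.Injective ⇑(sigmaT R S T))
    (K : Type*) [Field K] [Algebra R K] [IsFractionRing R K]
    (hσgen : Function.Bijective ⇑(LinearMap.baseChange K (sigmaT R S T)))
    (hTsurj : Function.Surjective ⇑T)
    (hTn : ∀ s ∈ IsLocalRing.maximalIdeal S, T s ∈ IsLocalRing.maximalIdeal R)
    (C : CartierStructure p R R) (tr : ℕ → (R →+ R) → (S →+ S))
    (htr : ∀ e, 1 ≤ e → ∀ φ ∈ C.carrier e,
      IsCartierMap p S e (tr e φ) ∧ IsTranspose p T e φ (tr e φ)) :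
    spSet S (pushFam C.carrier tr) = { s : S | ∀ x : S, T (s * x) ∈ spSet R C.carrier } := by
  ext s
  simp only [Set.mem_setOf_eq, spSet]
  constructor
  · intro hs x e he φ hφ
    have hψ : (tr e φ).comp (AddMonoidHom.mulLeft x) ∈ pushFam C.carrier tr e :=
      ⟨1, fun _ => φ, fun _ => x, fun _ => hφ, by simp⟩
    have h1 : tr e φ (x * s) ∈ IsLocalRing.maximalIdeal S := by
      simpa using hs e he _ hψ
    have h2 := (htr e he φ hφ).2 (x * s) 1
    rw [mul_one, one_pow, mul_one] at h2
    rw [mul_comm s x, ← h2]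
    exact hTn _ h1
  · intro hs e he ψ hψ
    obtain ⟨k, φ, t, hφ, rfl⟩ := hψ
    by_contra hmem
    have hunit : IsUnit ((∑ i, (tr e (φ i)).comp (AddMonoidHom.mulLeft (t i))) s) := by
      rwa [IsLocalRing.mem_maximalIdeal, mem_nonunits_iff, not_not] at hmem
    have key : ∀ s' : S,
        T ((∑ i, (tr e (φ i)).comp (AddMonoidHom.mulLeft (t i))) s * s')
          ∈ IsLocalRing.maximalIdeal R := by
      intro s'
      have heq : (∑ i, (tr e (φ i)).comp (AddMonoidHom.mulLeft (t i))) s * s'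
          = ∑ i, tr e (φ i) (t i * s) * s' := by
        rw [AddMonoidHom.finset_sum_apply, Finset.sum_mul]
        rfl
      rw [heq, map_sum]
      refine Ideal.sum_mem _ fun i _ => ?_
      rw [(htr e he (φ i) (hφ i)).2 (t i * s) s']
      have : (t i * s) * s' ^ p ^ e = s * (t i * s' ^ p ^ e) := by ring
      rw [this]
      exact hs (t i * s' ^ p ^ e) e he (φ i) (hφ i)
    obtain ⟨y, hy⟩ := hTsurj 1
    obtain ⟨u, hu⟩ := hunit
    have h1 := key ((↑u⁻¹ : Sˣ) * y)
    rw [← hu, ← mul_assoc, ← Units.val_mul, mul_inv_cancel, Units.val_one, one_mul, hy] at h1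
    exact (IsLocalRing.maximalIdeal.isMaximal R).ne_top (Ideal.eq_top_of_isUnit_mem _ h1 isUnit_one)
end

section
/- Fix a prime p. Let (R,m,k) ⊆ (S,n,l) be a finite extension of noetherian local rings of characteristic p with n ∩ R = m, and let T : S → R be an R-linear map such that σ : S → Hom_R(S,R), σ(s)(x) := T(s·x), is bijective, T is surjective, and T(n) ⊆ m. Let C be a Cartier subalgebra of C_R, with T-transposes φ^⊤ (which exist and are unique by bijectivity of σ). Then for every e ≥ 1: (i) the assignment ψ ↦ T∘ψ is an injective map from C_{e,S} into H_e := { additive maps ϑ : S → R with ϑ(r^{p^e}·s) = r·ϑ(s) for all r ∈ R, s ∈ S }; (ii) it maps (f*C)_e bijectively onto (f_*S)^♮_e, the additive subgroup of H_e generated by the maps x ↦ φ(ρ(x)) with φ ∈ C_e and ρ ∈ Hom_R(S,R); and (iii) for ψ ∈ (f*C)_e, ψ is surjective onto S if and only if T∘ψ is surjective onto R. -/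
/-- The subgroup `M^♮_e` generated by the maps `φ ∘ ρ`, `φ ∈ C_e`, `ρ ∈ Hom_R(M,R)`. -/
def natFam {R : Type*} [CommRing R] (D : ℕ → Set (R →+ R)) (M : Type*) [AddCommGroup M]
    [Module R M] (e : ℕ) : Set (M →+ R) :=
  (AddSubgroup.closure
    { ϑ : M →+ R | ∃ φ ∈ D e, ∃ ρ : M →ₗ[R] R, ϑ = φ.comp ρ.toAddMonoidHom } : Set (M →+ R))

/-- Post-composition with `T` is injective from `C_{e,S}` into the `p^e`-semilinear maps
`H_e ⊆ Hom(S, R)`, carries `(f^*C)_e` bijectively onto `(f_*S)^♮_e`, and preserves and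
reflects surjectivity on `(f^*C)_e`. -/
theorem trace_comp_bijOn_pushforward
    (p : ℕ) (hp : p.Prime) (R S : Type*) [CommRing R] [CommRing S]
    [IsNoetherianRing R] [IsNoetherianRing S] [IsLocalRing R] [IsLocalRing S]
    [CharP R p] [CharP S p] [Algebra R S] [Module.Finite R S]
    (hinj : Function.Injective (algebraMap R S))
    (hloc : (IsLocalRing.maximalIdeal S).comap (algebraMap R S) = IsLocalRing.maximalIdeal R)
    (T : S →ₗ[R] R)
    (hσbij : Function.Bijective ⇑(sigmaT R S T))
    (hTsurj : Function.Surjective ⇑T)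
    (hTn : ∀ s ∈ IsLocalRing.maximalIdeal S, T s ∈ IsLocalRing.maximalIdeal R)
    (C : CartierStructure p R R) (tr : ℕ → (R →+ R) → (S →+ S))
    (htr : ∀ e, 1 ≤ e → ∀ φ ∈ C.carrier e,
      IsCartierMap p S e (tr e φ) ∧ IsTranspose p T e φ (tr e φ))
    (e : ℕ) (he : 1 ≤ e) :
    (∀ ψ : S →+ S, IsCartierMap p S e ψ →
        IsCartierMap p R e (T.toAddMonoidHom.comp ψ)) ∧
    Set.InjOn (fun ψ : S →+ S => T.toAddMonoidHom.comp ψ) { ψ | IsCartierMap p S e ψ } ∧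
    Set.BijOn (fun ψ : S →+ S => T.toAddMonoidHom.comp ψ)
      (pushFam C.carrier tr e) (natFam C.carrier S e) ∧
    (∀ ψ ∈ pushFam C.carrier tr e,
      Function.Surjective ⇑ψ ↔ Function.Surjective ⇑(T.toAddMonoidHom.comp ψ)) := by
    classical
  have hcart_tr : ∀ φ ∈ C.carrier e, IsCartierMap p S e (tr e φ) :=
    fun φ h => (htr e he φ h).1
  have htrans : ∀ φ ∈ C.carrier e, IsTranspose p T e φ (tr e φ) :=
    fun φ h => (htr e he φ h).2
  -- every element of pushFam is a Cartier map
  have hpushCart : ∀ ψ ∈ pushFam C.carrier tr e, IsCartierMap p S e ψ := by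
    rintro ψ ⟨k, φ, s, hφ, rfl⟩
    intro a x
    simp only [AddMonoidHom.finset_sum_apply, AddMonoidHom.coe_comp, Function.comp_apply,
      AddMonoidHom.coe_mulLeft, Finset.smul_sum]
    refine Finset.sum_congr rfl fun i _ => ?_
    have h := hcart_tr (φ i) (hφ i) a (s i * x)
    rw [← h]
    congr 1
    simp only [smul_eq_mul]; ring
  -- Part 1
  have h1 : ∀ ψ : S →+ S, IsCartierMap p S e ψ →
      IsCartierMap p R e (T.toAddMonoidHom.comp ψ) := by
    intro ψ hψ a x
    simp only [AddMonoidHom.coe_comp, Function.comp_apply, LinearMap.toAddMonoidHom_coe]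
    have hx : (a : R) ^ p ^ e • x = (algebraMap R S a) ^ p ^ e • x := by
      rw [← map_pow, algebraMap_smul]
    rw [hx, hψ, algebraMap_smul, map_smul]
  -- Part 2
  have h2 : Set.InjOn (fun ψ : S →+ S => T.toAddMonoidHom.comp ψ)
      { ψ | IsCartierMap p S e ψ } := by
    intro ψ₁ hψ₁ ψ₂ hψ₂ heq
    ext x
    apply hσbij.injective
    ext s'
    simp only [sigmaT, LinearMap.mk₂_apply]
    have k₁ := hψ₁ s' x
    have k₂ := hψ₂ s' x
    simp only [smul_eq_mul] at k₁ k₂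
    have := congrArg (fun F : S →+ R => F (s' ^ p ^ e * x)) heq
    simp only [AddMonoidHom.coe_comp, Function.comp_apply, LinearMap.toAddMonoidHom_coe] at this
    rw [mul_comm (ψ₁ x) s', mul_comm (ψ₂ x) s', ← k₁, ← k₂]
    exact this
  -- the key computation: T ∘ (tr e φ) ∘ mulLeft s = φ ∘ σ(s)
  have hkey : ∀ φ ∈ C.carrier e, ∀ s : S,
      T.toAddMonoidHom.comp ((tr e φ).comp (AddMonoidHom.mulLeft s)) =
        φ.comp ((sigmaT R S T) s).toAddMonoidHom := by
    intro φ hφ s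
    ext x
    simp only [AddMonoidHom.coe_comp, Function.comp_apply, LinearMap.toAddMonoidHom_coe,
      AddMonoidHom.coe_mulLeft, sigmaT, LinearMap.mk₂_apply]
    have h := htrans φ hφ (s * x) 1
    simpa using h
  -- MapsTo
  have hmaps : Set.MapsTo (fun ψ : S →+ S => T.toAddMonoidHom.comp ψ)
      (pushFam C.carrier tr e) (natFam C.carrier S e) := by
    rintro ψ ⟨k, φ, s, hφ, rfl⟩
    have hsum : T.toAddMonoidHom.comp (∑ i, (tr e (φ i)).comp (AddMonoidHom.mulLeft (s i)))
        = ∑ i, T.toAddMonoidHom.comp ((tr e (φ i)).comp (AddMonoidHom.mulLeft (s i))) := by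
      ext x; simp
    show T.toAddMonoidHom.comp (∑ i, (tr e (φ i)).comp (AddMonoidHom.mulLeft (s i)))
      ∈ natFam C.carrier S e
    rw [hsum]
    refine AddSubgroup.sum_mem _ fun i _ => AddSubgroup.subset_closure ?_
    exact ⟨φ i, hφ i, (sigmaT R S T) (s i), hkey (φ i) (hφ i) (s i)⟩
  -- SurjOn
  have hsurjOn : Set.SurjOn (fun ψ : S →+ S => T.toAddMonoidHom.comp ψ)
      (pushFam C.carrier tr e) (natFam C.carrier S e) := by
    intro ϑ hϑ
    have hϑ' : ϑ ∈ AddSubgroup.closure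
        { ϑ : S →+ R | ∃ φ ∈ C.carrier e, ∃ ρ : S →ₗ[R] R, ϑ = φ.comp ρ.toAddMonoidHom } := hϑ
    refine AddSubgroup.closure_induction ?_ ?_ ?_ ?_ hϑ'
    · rintro ϑ ⟨φ, hφ, ρ, rfl⟩
      obtain ⟨s, hs⟩ := hσbij.surjective ρ
      refine ⟨(tr e φ).comp (AddMonoidHom.mulLeft s), ⟨1, fun _ => φ, fun _ => s, fun _ => hφ, ?_⟩, ?_⟩
      · simp
      · simp only
        rw [hkey φ hφ s, hs]
    · exact ⟨0, ⟨0, fun i => 0, fun i => 0, fun i => i.elim0, by simp⟩, by ext x; simp⟩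
    · rintro x y - - ⟨ψ₁, ⟨k₁, φ₁, s₁, hφ₁, rfl⟩, h₁⟩ ⟨ψ₂, ⟨k₂, φ₂, s₂, hφ₂, rfl⟩, h₂⟩
      refine ⟨(∑ i, (tr e (φ₁ i)).comp (AddMonoidHom.mulLeft (s₁ i))) +
          (∑ i, (tr e (φ₂ i)).comp (AddMonoidHom.mulLeft (s₂ i))),
        ⟨k₁ + k₂, Fin.addCases φ₁ φ₂, Fin.addCases s₁ s₂, ?_, ?_⟩, ?_⟩
      · intro i
        refine Fin.addCases (fun j => ?_) (fun j => ?_) i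
        · simpa using hφ₁ j
        · simpa using hφ₂ j
      · rw [Fin.sum_univ_add]
        simp
      · simp only at h₁ h₂ ⊢
        rw [← h₁, ← h₂]
        ext x; simp
    · rintro x - ⟨ψ, ⟨k, φ, s, hφ, rfl⟩, hx⟩
      refine ⟨-(∑ i, (tr e (φ i)).comp (AddMonoidHom.mulLeft (s i))),
        ⟨k, φ, fun i => -(s i), hφ, ?_⟩, ?_⟩
      · rw [← Finset.sum_neg_distrib]
        refine Finset.sum_congr rfl fun i _ => ?_
        ext y; simp
      · simp only at hx ⊢
        rw [← hx]
        ext y; simp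
  -- Part 4
  have h4 : ∀ ψ ∈ pushFam C.carrier tr e,
      Function.Surjective ⇑ψ ↔ Function.Surjective ⇑(T.toAddMonoidHom.comp ψ) := by
    intro ψ hψ
    constructor
    · intro h r
      obtain ⟨s, hs⟩ := hTsurj r
      obtain ⟨x, hx⟩ := h s
      exact ⟨x, by simp [hx, hs]⟩
    · intro h
      have hC := hpushCart ψ hψ
      let I : Ideal S :=
        { carrier := Set.range ψ
          add_mem' := by rintro a b ⟨x, rfl⟩ ⟨y, rfl⟩; exact ⟨x + y, map_add ψ x y⟩
          zero_mem' := ⟨0, map_zero ψ⟩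
          smul_mem' := by rintro c b ⟨x, rfl⟩; exact ⟨c ^ p ^ e • x, hC c x⟩ }
      have hItop : I = ⊤ := by
        by_contra hne
        have hle := IsLocalRing.le_maximalIdeal hne
        obtain ⟨x, hx⟩ := h 1
        simp only [AddMonoidHom.coe_comp, Function.comp_apply,
          LinearMap.toAddMonoidHom_coe] at hx
        have hmem : ψ x ∈ IsLocalRing.maximalIdeal S := hle ⟨x, rfl⟩
        have h1 : (1 : R) ∈ IsLocalRing.maximalIdeal R := hx ▸ hTn _ hmem
        exact (IsLocalRing.maximalIdeal.isMaximal R).ne_top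
          (Ideal.eq_top_of_isUnit_mem _ h1 isUnit_one)
      intro y
      have hy : y ∈ I := hItop ▸ Submodule.mem_top
      exact hy
  exact ⟨h1, h2, ⟨hmaps, h2.mono hpushCart, hsurjOn⟩, h4⟩
end

section
/- Fix a prime p. Let (R,m) ⊆ (S,n) be a finite extension of noetherian local domains of characteristic p with n ∩ R = m. Let T : S → R be an R-linear map such that σ is injective and a generic isomorphism, T is surjective, and T(n) ⊆ m. Let C be a Cartier subalgebra of C_R and suppose that every φ ∈ C_e (e ≥ 1) has a chosen T-transpose φ^⊤. Then there exist e ≥ 1, φ ∈ C_e and r ∈ R with φ(r) = 1 if and only if there exist e ≥ 1, ψ ∈ (f*C)_e and s ∈ S with ψ(s) = 1. (That is, (R,C) is F-pure if and only if (S,f*C) is F-pure.) -/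
lemma addHom_sum_apply {M N ι : Type*} [AddCommMonoid M] [AddCommMonoid N]
    (s : Finset ι) (f : ι → M →+ N) (x : M) : (∑ i ∈ s, f i) x = ∑ i ∈ s, f i x := by
  induction s using Finset.cons_induction with
  | empty => simp
  | cons a s ha ih => simp [Finset.sum_cons, ih]

/-- **F-purity descends and ascends** along a finite local extension equipped with a
transposable structure: `(R,C)` is `F`-pure iff `(S, f^*C)` is `F`-pure. -/
theorem fPure_iff_fPure_pushforward
    (p : ℕ) (hp : p.Prime) (R S : Type*) [CommRing R] [CommRing S]
    [IsDomain R] [IsDomain S] [IsNoetherianRing R] [IsNoetherianRing S]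
    [IsLocalRing R] [IsLocalRing S] [CharP R p] [CharP S p]
    [Algebra R S] [Module.Finite R S]
    (hinj : Function.Injective (algebraMap R S))
    (hloc : (IsLocalRing.maximalIdeal S).comap (algebraMap R S) = IsLocalRing.maximalIdeal R)
    (T : S →ₗ[R] R)
    (hσinj : Function.Injective ⇑(sigmaT R S T))
    (K : Type*) [Field K] [Algebra R K] [IsFractionRing R K]
    (hσgen : Function.Bijective ⇑(LinearMap.baseChange K (sigmaT R S T)))
    (hTsurj : Function.Surjective ⇑T)
    (hTn : ∀ s ∈ IsLocalRing.maximalIdeal S, T s ∈ IsLocalRing.maximalIdeal R)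
    (C : CartierStructure p R R) (tr : ℕ → (R →+ R) → (S →+ S))
    (htr : ∀ e, 1 ≤ e → ∀ φ ∈ C.carrier e,
      IsCartierMap p S e (tr e φ) ∧ IsTranspose p T e φ (tr e φ)) :
    (∃ e, 1 ≤ e ∧ ∃ φ ∈ C.carrier e, ∃ r : R, φ r = 1) ↔
      (∃ e, 1 ≤ e ∧ ∃ ψ ∈ pushFam C.carrier tr e, ∃ s : S, ψ s = 1) := by
  constructor
  · rintro ⟨e, he, φ, hφ, r, hr⟩
    obtain ⟨s₀, hs₀⟩ := hTsurj r
    obtain ⟨hcart, htrans⟩ := htr e he φ hφ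
    have hu1 : T (tr e φ s₀) = 1 := by
      have h := htrans s₀ 1
      simpa [hs₀, hr] using h
    have hunit : IsUnit (tr e φ s₀) := by
      by_contra h
      have hm : tr e φ s₀ ∈ IsLocalRing.maximalIdeal S := h
      have h1m : (1 : R) ∈ IsLocalRing.maximalIdeal R := hu1 ▸ hTn _ hm
      exact (IsLocalRing.maximalIdeal.isMaximal R).ne_top
        ((Ideal.eq_top_iff_one _).mpr h1m)
    obtain ⟨u, hu⟩ := hunit
    refine ⟨e, he, (tr e φ).comp (AddMonoidHom.mulLeft 1),
      ⟨1, fun _ => φ, fun _ => 1, fun _ => hφ, by rw [Fin.sum_univ_one]⟩,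
      ((u⁻¹ : Sˣ) : S) ^ p ^ e * s₀, ?_⟩
    have hc := hcart ((u⁻¹ : Sˣ) : S) s₀
    simp only [smul_eq_mul] at hc
    simp only [AddMonoidHom.coe_comp, Function.comp_apply, AddMonoidHom.coe_mulLeft, one_mul]
    rw [hc, ← hu, Units.inv_mul]
  · rintro ⟨e, he, ψ, ⟨k, φ, sv, hφ, rfl⟩, s, hs⟩
    obtain ⟨s', hs'⟩ := hTsurj 1
    have h1 : (1 : R) = ∑ i, (φ i) (T ((sv i * s) * s' ^ p ^ e)) := by
      have hψ : (∑ i, (tr e (φ i)).comp (AddMonoidHom.mulLeft (sv i))) s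
          = ∑ i, tr e (φ i) (sv i * s) := by
        rw [addHom_sum_apply]; rfl
      calc (1 : R) = T ((1 : S) * s') := by rw [one_mul, hs']
        _ = T ((∑ i, tr e (φ i) (sv i * s)) * s') := by rw [← hs, hψ]
        _ = ∑ i, T (tr e (φ i) (sv i * s) * s') := by rw [Finset.sum_mul, map_sum]
        _ = ∑ i, (φ i) (T ((sv i * s) * s' ^ p ^ e)) := by
            refine Finset.sum_congr rfl fun i _ => ?_
            exact (htr e he (φ i) (hφ i)).2 (sv i * s) s'
    rcases Nat.eq_zero_or_pos k with hk | hk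
    · subst hk
      simp only [Finset.univ_eq_empty, Finset.sum_empty] at h1
      exact absurd h1 one_ne_zero
    · set r : Fin k → R := fun i => T ((sv i * s) * s' ^ p ^ e) with hrdef
      have hmem : (∑ i, (φ i).comp (DistribMulAction.toAddMonoidHom R (r i))) ∈ C.carrier e := by
        haveI : Nonempty (Fin k) := ⟨⟨0, hk⟩⟩
        refine Finset.sum_induction_nonempty _ (· ∈ C.carrier e)
          (fun a b ha hb => C.add_mem e he a ha b hb) Finset.univ_nonempty
          fun i _ => C.mul_mem e he (r i) (φ i) (hφ i)
      refine ⟨e, he, _, hmem, 1, ?_⟩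
      rw [addHom_sum_apply]
      have : ∀ i : Fin k, ((φ i).comp (DistribMulAction.toAddMonoidHom R (r i))) 1
          = (φ i) (r i) := by
        intro i
        simp [DistribMulAction.toAddMonoidHom, smul_eq_mul]
      rw [Finset.sum_congr rfl fun i _ => this i]
      exact h1.symm
end

section
/- Fix a prime p. Let R be a noetherian F-finite commutative ring of characteristic p, S a commutative R-algebra with R → S injective and S finitely generated as an R-module, M a finitely generated R-module, and C a Cartier structure on M. Assume there is j₀ ≥ 1 with C_+^{j}M = C_+^{j₀}M for all j ≥ j₀, and set σ(M,C) := C_+^{j₀}M; assume analogously that the chain (f*C)_+^{j}(f^!M) stabilizes and let σ(f^!M, f*C) be its stable value. Then Tr_M(σ(f^!M, f*C)) ⊆ σ(M,C), and equality holds if Tr_M : Hom_R(S,M) → M (evaluation at 1) is surjective. -/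
/-- Type synonym for a ring viewed as a module over itself via Frobenius. -/
def FrobMod (A : Type*) := A

instance {A : Type*} [AddCommGroup A] : AddCommGroup (FrobMod A) := ‹AddCommGroup A›

/-- The module structure of `A` on `FrobMod A = A` via the Frobenius `a ↦ a^p`;
`A` is `F`-finite iff `FrobMod A` is a finite module, and `[A^{1/p} : A]` is its rank. -/
noncomputable def frobModule (p : ℕ) (hp : p.Prime) (A : Type*) [CommRing A] [CharP A p] :
    Module A (FrobMod A) :=
  haveI : ExpChar A p := .prime hp
  Module.compHom A (frobenius A p)

/-- Plain iterated composition `φ₀ ∘ φ₁ ∘ ⋯ ∘ φ_{j-1}`. -/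
def homChain {X : Type*} [AddCommMonoid X] : (j : ℕ) → (Fin j → X →+ X) → (X →+ X)
  | 0, _ => AddMonoidHom.id X
  | j + 1, φ => (φ 0).comp (homChain j fun i => φ i.succ)

/-- `C_+^j X`, the submodule generated by `j`-fold composites (of maps of positive degree
from the family `D`) applied to elements of `X`. -/
def plusPow (A : Type*) [CommRing A] (X : Type*) [AddCommGroup X] [Module A X]
    (D : ℕ → Set (X →+ X)) (j : ℕ) : Submodule A X :=
  Submodule.span A { x : X | ∃ (ev : Fin j → ℕ), (∀ i, 1 ≤ ev i) ∧
    ∃ (φ : Fin j → X →+ X), (∀ i, φ i ∈ D (ev i)) ∧ ∃ m : X, x = homChain j φ m }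

/-- The degree-`e` part of the Cartier structure `f^*C` on `f^!M = Hom_R(S,M)`:
maps of the form `Σᵢ φᵢ^! · sᵢ`, described pointwise by
`(Σᵢ φᵢ^! · sᵢ)(μ)(x) = Σᵢ φᵢ (μ (x^{p^e} * sᵢ))`. -/
def pushShriek (p : ℕ) (R S : Type*) [CommRing R] [CommRing S] [Algebra R S]
    (M : Type*) [AddCommGroup M] [Module R M] (D : ℕ → Set (M →+ M)) :
    ℕ → Set ((S →ₗ[R] M) →+ (S →ₗ[R] M)) := fun e =>
  { ν | ∃ (k : ℕ) (φ : Fin k → M →+ M) (s : Fin k → S), (∀ i, φ i ∈ D e) ∧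
      ∀ (μ : S →ₗ[R] M) (x : S), ν μ x = ∑ i, φ i (μ (x ^ p ^ e * s i)) }

section Aux

variable {p : ℕ} {R : Type*} [CommRing R] {M : Type*} [AddCommGroup M] [Module R M]

/-- Applying a degree-`e` Cartier map sends `C_+^j M` into `C_+^{j+1} M`. -/
lemma apply_mem_plusPow_succ (C : CartierStructure p R M) {e : ℕ} (he : 1 ≤ e)
    {j : ℕ} {x : M} (hx : x ∈ plusPow R M C.carrier j) :
    ∀ ψ ∈ C.carrier e, ψ x ∈ plusPow R M C.carrier (j + 1) := by
  induction hx using Submodule.span_induction with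
  | mem x hgen =>
    intro ψ hψ
    obtain ⟨ev, hev, φ, hφ, m, rfl⟩ := hgen
    apply Submodule.subset_span
    refine ⟨Fin.cons e ev, ?_, Fin.cons ψ φ, ?_, m, ?_⟩
    · intro i; cases i using Fin.cases with
      | zero => simpa using he
      | succ i => simpa using hev i
    · intro i; cases i using Fin.cases with
      | zero => simpa using hψ
      | succ i => simpa using hφ i
    · show ψ (homChain j φ m) = homChain (j + 1) (Fin.cons ψ φ) m
      have h : (fun i : Fin j => (Fin.cons ψ φ : Fin (j+1) → M →+ M) i.succ) = φ := by
        funext i; simp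
      simp [homChain, h]
  | zero => intro ψ _; simp
  | add x y _ _ ihx ihy =>
    intro ψ hψ
    rw [map_add]
    exact Submodule.add_mem _ (ihx ψ hψ) (ihy ψ hψ)
  | smul r x _ ih =>
    intro ψ hψ
    exact ih _ (C.mul_mem e he r ψ hψ)

variable {S : Type*} [CommRing S] [Algebra R S]

/-- Evaluating a chain of `pushShriek` maps at any point lands in `C_+^j M`. -/
lemma eval_chain_mem (C : CartierStructure p R M) :
    ∀ (j : ℕ) (ev : Fin j → ℕ), (∀ i, 1 ≤ ev i) →
      ∀ (Ψ : Fin j → (S →ₗ[R] M) →+ (S →ₗ[R] M)),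
        (∀ i, Ψ i ∈ pushShriek p R S M C.carrier (ev i)) →
      ∀ (μ : S →ₗ[R] M) (s : S), (homChain j Ψ μ) s ∈ plusPow R M C.carrier j := by
  intro j
  induction j with
  | zero =>
    intro ev _ Ψ _ μ s
    exact Submodule.subset_span ⟨Fin.elim0, fun i => i.elim0, Fin.elim0, fun i => i.elim0,
      μ s, rfl⟩
  | succ j ih =>
    intro ev hev Ψ hΨ μ s
    obtain ⟨k, φ, sa, hφ, hform⟩ := hΨ 0
    show (Ψ 0) (homChain j (fun i => Ψ i.succ) μ) s ∈ _
    rw [hform]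
    refine Submodule.sum_mem _ fun i _ => ?_
    exact apply_mem_plusPow_succ C (hev 0)
      (ih (fun i => ev i.succ) (fun i => hev i.succ) _ (fun i => hΨ i.succ) μ _) _ (hφ i)

lemma eval_mem (C : CartierStructure p R M) {j : ℕ} {ξ : S →ₗ[R] M}
    (hξ : ξ ∈ plusPow S (S →ₗ[R] M) (pushShriek p R S M C.carrier) j) :
    ∀ s : S, ξ s ∈ plusPow R M C.carrier j := by
  induction hξ using Submodule.span_induction with
  | mem ξ hgen =>
    obtain ⟨ev, hev, Ψ, hΨ, μ, rfl⟩ := hgen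
    exact fun s => eval_chain_mem C j ev hev Ψ hΨ μ s
  | zero => intro s; simp
  | add ξ η _ _ ihξ ihη =>
    intro s
    exact Submodule.add_mem _ (ihξ s) (ihη s)
  | smul t ξ _ ih =>
    intro s
    exact ih (s * t)

end Aux

section Shriek

variable {p : ℕ} {R : Type*} [CommRing R] {M : Type*} [AddCommGroup M] [Module R M]
variable {S : Type*} [CommRing S] [Algebra R S]

/-- The map `φ^!` on `f^! M = Hom_R(S, M)`, given by `φ^!(μ)(x) = φ (μ (x ^ p ^ e))`. -/
def shriekHom (hp : p.Prime) [CharP S p] (C : CartierStructure p R M) (e : ℕ) (he : 1 ≤ e)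
    (φ : M →+ M) (hφ : φ ∈ C.carrier e) : (S →ₗ[R] M) →+ (S →ₗ[R] M) where
  toFun μ :=
    { toFun := fun x => φ (μ (x ^ p ^ e))
      map_add' := fun x y => by
        haveI := Fact.mk hp
        show φ (μ ((x + y) ^ p ^ e)) = φ (μ (x ^ p ^ e)) + φ (μ (y ^ p ^ e))
        rw [add_pow_char_pow, map_add, map_add]
      map_smul' := fun r x => by
        show φ (μ ((r • x) ^ p ^ e)) = r • φ (μ (x ^ p ^ e))
        rw [smul_pow, map_smul, C.cartier_mem e he φ hφ r] }
  map_zero' := by ext x; simp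
  map_add' μ ν := by ext x; simp

lemma shriekHom_mem (hp : p.Prime) [CharP S p] (C : CartierStructure p R M) (e : ℕ)
    (he : 1 ≤ e) (φ : M →+ M) (hφ : φ ∈ C.carrier e) :
    shriekHom (S := S) hp C e he φ hφ ∈ pushShriek p R S M C.carrier e := by
  refine ⟨1, ![φ], ![1], by simp [hφ], fun μ x => ?_⟩
  simp [shriekHom]

lemma shriek_chain_eval_one (hp : p.Prime) [CharP S p] (C : CartierStructure p R M) :
    ∀ (j : ℕ) (ev : Fin j → ℕ) (hev : ∀ i, 1 ≤ ev i) (φ : Fin j → M →+ M)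
      (hφ : ∀ i, φ i ∈ C.carrier (ev i)) (μ : S →ₗ[R] M),
      (homChain j (fun i => shriekHom (S := S) hp C (ev i) (hev i) (φ i) (hφ i)) μ) 1 =
        homChain j φ (μ 1) := by
  intro j
  induction j with
  | zero => intro ev hev φ hφ μ; rfl
  | succ j ih =>
    intro ev hev φ hφ μ
    show (φ 0) ((homChain j (fun i => shriekHom (S := S) hp C (ev i.succ) (hev i.succ)
        (φ i.succ) (hφ i.succ)) μ) ((1 : S) ^ p ^ ev 0)) = (φ 0) (homChain j _ (μ 1))
    rw [one_pow, ih (fun i => ev i.succ) (fun i => hev i.succ) _ (fun i => hφ i.succ) μ]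

lemma plusPow_subset_image (hp : p.Prime) [CharP S p] (C : CartierStructure p R M)
    (hsurj : Function.Surjective (fun μ : S →ₗ[R] M => μ (1 : S))) (j : ℕ) {x : M}
    (hx : x ∈ plusPow R M C.carrier j) :
    ∃ ξ ∈ plusPow S (S →ₗ[R] M) (pushShriek p R S M C.carrier) j, ξ (1 : S) = x := by
  induction hx using Submodule.span_induction with
  | mem x hgen =>
    obtain ⟨ev, hev, φ, hφ, m, rfl⟩ := hgen
    obtain ⟨μ, hμ⟩ := hsurj m
    refine ⟨homChain j (fun i => shriekHom (S := S) hp C (ev i) (hev i) (φ i) (hφ i)) μ,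
      Submodule.subset_span ⟨ev, hev, _, fun i => shriekHom_mem hp C (ev i) (hev i)
        (φ i) (hφ i), μ, rfl⟩, ?_⟩
    rw [shriek_chain_eval_one hp C j ev hev φ hφ μ]
    exact congrArg _ hμ
  | zero => exact ⟨0, Submodule.zero_mem _, rfl⟩
  | add x y _ _ ihx ihy =>
    obtain ⟨ξ, hξ, hξ1⟩ := ihx
    obtain ⟨η, hη, hη1⟩ := ihy
    exact ⟨ξ + η, Submodule.add_mem _ hξ hη, by simp [hξ1, hη1]⟩
  | smul r x _ ih =>
    obtain ⟨ξ, hξ, hξ1⟩ := ih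
    refine ⟨algebraMap R S r • ξ, Submodule.smul_mem _ _ hξ, ?_⟩
    show ξ ((1 : S) * algebraMap R S r) = r • x
    rw [one_mul, Algebra.algebraMap_eq_smul_one, map_smul, hξ1]

end Shriek

/-- **Non-F-pure modules under finite covers:**
`Tr_M(σ(f^!M, f^*C)) ⊆ σ(M, C)`, with equality if the trace `Tr_M` is surjective. -/
theorem trace_image_nonFPureModule
    (p : ℕ) (hp : p.Prime) (R : Type*) [CommRing R] [IsNoetherianRing R] [CharP R p]
    (hFf : letI := frobModule p hp R; Module.Finite R (FrobMod R))
    (S : Type*) [CommRing S] [Algebra R S] [Module.Finite R S]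
    (hinj : Function.Injective (algebraMap R S))
    (M : Type*) [AddCommGroup M] [Module R M] [Module.Finite R M]
    (C : CartierStructure p R M)
    (j₀ : ℕ) (hj₀ : 1 ≤ j₀)
    (hstabM : ∀ j, j₀ ≤ j → plusPow R M C.carrier j = plusPow R M C.carrier j₀)
    (j₁ : ℕ) (hj₁ : 1 ≤ j₁)
    (hstabS : ∀ j, j₁ ≤ j →
      plusPow S (S →ₗ[R] M) (pushShriek p R S M C.carrier) j =
        plusPow S (S →ₗ[R] M) (pushShriek p R S M C.carrier) j₁) :
    ((fun μ : S →ₗ[R] M => μ (1 : S)) ''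
        (plusPow S (S →ₗ[R] M) (pushShriek p R S M C.carrier) j₁ : Set (S →ₗ[R] M)) ⊆
      (plusPow R M C.carrier j₀ : Set M)) ∧
    (Function.Surjective (fun μ : S →ₗ[R] M => μ (1 : S)) →
      (fun μ : S →ₗ[R] M => μ (1 : S)) ''
          (plusPow S (S →ₗ[R] M) (pushShriek p R S M C.carrier) j₁ : Set (S →ₗ[R] M)) =
        (plusPow R M C.carrier j₀ : Set M)) := by
  haveI : CharP S p := charP_of_injective_algebraMap hinj p
  set N := max j₀ j₁ with hN
  have hS : plusPow S (S →ₗ[R] M) (pushShriek p R S M C.carrier) N =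
      plusPow S (S →ₗ[R] M) (pushShriek p R S M C.carrier) j₁ :=
    hstabS N (le_max_right _ _)
  have hM : plusPow R M C.carrier N = plusPow R M C.carrier j₀ :=
    hstabM N (le_max_left _ _)
  have part1 : (fun μ : S →ₗ[R] M => μ (1 : S)) ''
      (plusPow S (S →ₗ[R] M) (pushShriek p R S M C.carrier) j₁ : Set (S →ₗ[R] M)) ⊆
      (plusPow R M C.carrier j₀ : Set M) := by
    rintro x ⟨ξ, hξ, rfl⟩
    rw [← hM]
    rw [← hS] at hξ
    exact eval_mem C hξ 1
  refine ⟨part1, fun hsurj => Set.Subset.antisymm part1 ?_⟩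
  intro x hx
  rw [← hM] at hx
  obtain ⟨ξ, hξ, h1⟩ := plusPow_subset_image hp C hsurj N hx
  rw [hS] at hξ
  exact ⟨ξ, hξ, h1⟩
end

section
/- Fix a prime p. Let R ⊆ S be a finite extension of noetherian commutative domains of characteristic p and T : S → R an R-linear map. Let 𝔞 ⊊ R be a radical ideal such that for every minimal prime 𝔭 of 𝔞 one has √(𝔭S) = { s ∈ S : T(s·x) ∈ 𝔭 for all x ∈ S }. Let e ≥ 1 and let φ ∈ C_{e,R} admit a T-transpose φ^⊤, and suppose φ(𝔞) ⊆ 𝔞. Then φ^⊤(√(𝔞S)) ⊆ √(𝔞S). -/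
namespace Ideal

variable {R S : Type*} [CommRing R] [CommRing S]

theorem exists_notMem_mul_mem_of_mem_minimalPrimes {I 𝔭 : Ideal R} (hI : I.radical = I)
    (h𝔭 : 𝔭 ∈ I.minimalPrimes) {x : R} (hx : x ∈ 𝔭) : ∃ c ∉ 𝔭, c * x ∈ I := by
  have : 𝔭.IsPrime := h𝔭.1.1
  have hloc := IsLocalization.AtPrime.radical_map_of_mem_minimalPrimes
    (Localization.AtPrime 𝔭) 𝔭 I h𝔭
  obtain ⟨n, hn⟩ : algebraMap R (Localization.AtPrime 𝔭) x ∈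
      (I.map (algebraMap R (Localization.AtPrime 𝔭))).radical :=
    hloc ▸ mem_map_of_mem _ hx
  rw [← map_pow, IsLocalization.algebraMap_mem_map_algebraMap_iff 𝔭.primeCompl] at hn
  obtain ⟨c, hc, hcx⟩ := hn
  refine ⟨c, hc, hI ▸ ⟨n + 1, ?_⟩⟩
  have hpow : (c * x) ^ (n + 1) = c ^ n * x * (c * x ^ n) := by ring
  exact hpow ▸ I.mul_mem_left _ hcx

theorem radical_map_eq_iInf_minimalPrimes (f : R →+* S) (I : Ideal R) :
    (I.map f).radical = ⨅ 𝔭 ∈ I.minimalPrimes, (𝔭.map f).radical := by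
  refine le_antisymm (le_iInf₂ fun 𝔭 h𝔭 ↦ radical_mono (map_mono h𝔭.1.2)) ?_
  rw [radical_eq_sInf (I.map f)]
  refine le_sInf fun Q ⟨hIQ, hQ⟩ ↦ ?_
  obtain ⟨𝔭, h𝔭, h𝔭Q⟩ := exists_minimalPrimes_le (map_le_iff_le_comap.mp hIQ)
  calc ⨅ 𝔭 ∈ I.minimalPrimes, (𝔭.map f).radical ≤ (𝔭.map f).radical := iInf₂_le 𝔭 h𝔭
    _ ≤ Q := hQ.radical_le_iff.mpr (map_le_iff_le_comap.mpr h𝔭Q)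

end Ideal

theorem IsCartierMap.map_mem_of_mem_minimalPrimes {p : ℕ} {R : Type*} [CommRing R] {e : ℕ}
    {φ : R →+ R} (hφ : IsCartierMap p R e φ) (hpe : p ^ e ≠ 0) {I 𝔭 : Ideal R}
    (hI : I.radical = I) (hφI : ∀ a ∈ I, φ a ∈ I) (h𝔭 : 𝔭 ∈ I.minimalPrimes) {a : R}
    (ha : a ∈ 𝔭) : φ a ∈ 𝔭 := by
  obtain ⟨c, hc, hca⟩ := Ideal.exists_notMem_mul_mem_of_mem_minimalPrimes hI h𝔭 ha
  obtain ⟨k, hk⟩ := Nat.exists_eq_succ_of_ne_zero hpe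
  have hpow : c ^ p ^ e * a ∈ I := by
    rw [hk, pow_succ, mul_assoc]
    exact I.mul_mem_left _ hca
  have hcφ : c * φ a ∈ I := by
    rw [← smul_eq_mul, ← hφ c a, smul_eq_mul]
    exact hφI _ hpow
  exact (h𝔭.1.1.mem_or_mem (h𝔭.1.2 hcφ)).resolve_left hc

theorem IsTranspose.map_mem_of_forall_mul_mem {p : ℕ} {R S : Type*} [CommRing R] [CommRing S]
    [Algebra R S] {T : S →ₗ[R] R} {e : ℕ} {φ : R →+ R} {ψ : S →+ S}
    (hψ : IsTranspose p T e φ ψ) {𝔭 : Ideal R} (hφ𝔭 : ∀ a ∈ 𝔭, φ a ∈ 𝔭) {s : S}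
    (hs : ∀ x, T (s * x) ∈ 𝔭) (x : S) : T (ψ s * x) ∈ 𝔭 :=
  hψ s x ▸ hφ𝔭 _ (hs _)

theorem transpose_compatible_radical_general
    (p : ℕ) (hp : p.Prime) (R S : Type*) [CommRing R] [CommRing S]
    [Algebra R S] (T : S →ₗ[R] R)
    (𝔞 : Ideal R) (h𝔞rad : 𝔞.radical = 𝔞)
    (hmin : ∀ 𝔭 ∈ 𝔞.minimalPrimes,
      ((Ideal.map (algebraMap R S) 𝔭).radical : Set S) = { s : S | ∀ x : S, T (s * x) ∈ 𝔭 })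
    (e : ℕ) (φ : R →+ R) (hφ : IsCartierMap p R e φ)
    (ψ : S →+ S) (hψt : IsTranspose p T e φ ψ)
    (hstab : ∀ a ∈ 𝔞, φ a ∈ 𝔞) :
    ∀ s ∈ (Ideal.map (algebraMap R S) 𝔞).radical,
      ψ s ∈ (Ideal.map (algebraMap R S) 𝔞).radical := by
  intro s hs
  rw [Ideal.radical_map_eq_iInf_minimalPrimes] at hs ⊢
  simp only [Submodule.mem_iInf] at hs ⊢
  intro 𝔭 h𝔭
  have hφ𝔭 : ∀ a ∈ 𝔭, φ a ∈ 𝔭 := fun _ ha ↦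
    hφ.map_mem_of_mem_minimalPrimes (pow_ne_zero e hp.ne_zero) h𝔞rad hstab h𝔭 ha
  have hs𝔭 : ∀ x, T (s * x) ∈ 𝔭 := (Set.ext_iff.mp (hmin 𝔭 h𝔭) s).mp (hs 𝔭 h𝔭)
  exact (Set.ext_iff.mp (hmin 𝔭 h𝔭) (ψ s)).mpr (hψt.map_mem_of_forall_mul_mem hφ𝔭 hs𝔭)

/-- If `√(𝔭S) = f^!𝔭 :_S T` for every minimal prime `𝔭` of a radical ideal `𝔞` compatible
with `φ`, then the transpose `φ^⊤` is compatible with `√(𝔞S)`. -/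
theorem transpose_compatible_radical
    (p : ℕ) (hp : p.Prime) (R S : Type*) [CommRing R] [CommRing S]
    [IsDomain R] [IsDomain S] [IsNoetherianRing R] [IsNoetherianRing S]
    [CharP R p] [CharP S p] [Algebra R S] [Module.Finite R S]
    (hinj : Function.Injective (algebraMap R S)) (T : S →ₗ[R] R)
    (𝔞 : Ideal R) (h𝔞ne : 𝔞 ≠ ⊤) (h𝔞rad : 𝔞.radical = 𝔞)
    (hmin : ∀ 𝔭 ∈ 𝔞.minimalPrimes,
      ((Ideal.map (algebraMap R S) 𝔭).radical : Set S) = { s : S | ∀ x : S, T (s * x) ∈ 𝔭 })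
    (e : ℕ) (he : 1 ≤ e) (φ : R →+ R) (hφ : IsCartierMap p R e φ)
    (ψ : S →+ S) (hψ : IsCartierMap p S e ψ) (hψt : IsTranspose p T e φ ψ)
    (hstab : ∀ a ∈ 𝔞, φ a ∈ 𝔞) :
    ∀ s ∈ (Ideal.map (algebraMap R S) 𝔞).radical,
      ψ s ∈ (Ideal.map (algebraMap R S) 𝔞).radical :=
  transpose_compatible_radical_general p hp R S T 𝔞 h𝔞rad hmin e φ hφ ψ hψt hstab
end

section
/- Fix a prime p. Let R ⊆ S be a finite extension of F-finite noetherian commutative domains of characteristic p, and let T : S → R be an R-linear map such that σ is injective and a generic isomorphism. Let 𝔭 ⊊ R be a prime ideal with √(𝔭S) = { s ∈ S : T(s·x) ∈ 𝔭 for all x ∈ S }, let C be a Cartier subalgebra of C_R such that every φ ∈ C_e has a chosen T-transpose φ^⊤ and such that φ(𝔭) ⊆ 𝔭 for all e ≥ 1 and φ ∈ C_e. Then there exist e ≥ 1 and φ ∈ C_e with φ(R) ⊄ 𝔭 if and only if there exist e ≥ 1, ψ ∈ (f*C)_e and a prime ideal 𝔮 of S with 𝔮 ∩ R = 𝔭 such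 that ψ(S) ⊄ 𝔮. -/
/-! The hypothesis on `T` says that `√(𝔭S)` is the largest ideal of `S` whose image under `T`
lies in `𝔭`. Hence every minimal prime `𝔮` of `𝔭S` lies over `𝔭`: for `r ∈ 𝔮 ∩ R` there is
`y ∉ √(𝔭S)` with `r y ∈ √(𝔭S)`, and an `x` with `T(y x) ∉ 𝔭` gives `r · T(y x) ∈ 𝔭`.
By the transpose rule `T(φ^⊤(s) x) = φ(T(s x^{p^e}))`, every `ψ ∈ (f^*C)_e` maps `S` into
`√(𝔭S)` once `C_e` maps `R` into `𝔭`. Conversely, if `φ(r) ∉ 𝔭`, lying over gives `𝔭S ≠ S`,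
hence some `u` with `T u ∉ 𝔭`, and `T(φ^⊤(r (T u)^{p^e-1} u)) = T u · φ(r) ∉ 𝔭`; so this value
avoids a minimal prime of `𝔭S`. -/

lemma mem_pushFam_of_mem {R S : Type*} [CommRing R] [CommRing S] {D : ℕ → Set (R →+ R)}
    {tr : ℕ → (R →+ R) → (S →+ S)} {e : ℕ} {φ : R →+ R} (hφ : φ ∈ D e) (s : S) :
    (tr e φ).comp (AddMonoidHom.mulLeft s) ∈ pushFam D tr e :=
  ⟨1, fun _ => φ, fun _ => s, fun _ => hφ, by rw [Fin.sum_univ_one]⟩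

lemma Ideal.exists_mem_minimalPrimes_notMem {A : Type*} [CommRing A] {I : Ideal A} {s : A}
    (hs : s ∉ I.radical) : ∃ 𝔮 ∈ I.minimalPrimes, s ∉ 𝔮 := by
  simpa [← Ideal.sInf_minimalPrimes] using hs

section

variable {p : ℕ} {R S : Type*} [CommRing R] [CommRing S] [Algebra R S] {T : S →ₗ[R] R}
  {𝔭 : Ideal R}

lemma apply_mul_mem_of_mem_pushFam {D : ℕ → Set (R →+ R)} {tr : ℕ → (R →+ R) → (S →+ S)}
    {e : ℕ} (htr : ∀ φ ∈ D e, IsTranspose p T e φ (tr e φ)) (hD : ∀ φ ∈ D e, ∀ r, φ r ∈ 𝔭)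
    {ψ : S →+ S} (hψ : ψ ∈ pushFam D tr e) (s x : S) : T (ψ s * x) ∈ 𝔭 := by
  obtain ⟨k, φ, t, hφ, rfl⟩ := hψ
  rw [AddMonoidHom.finsetSum_apply, Finset.sum_mul, map_sum]
  refine Ideal.sum_mem _ fun i _ => ?_
  rw [AddMonoidHom.comp_apply, AddMonoidHom.coe_mulLeft, htr (φ i) (hφ i)]
  exact hD _ (hφ i) _

lemma IsTranspose.apply_algebraMap_mul (hp : p ≠ 0) {e : ℕ} {φ : R →+ R}
    {ψ : S →+ S} (hφ : IsCartierMap p R e φ) (hψ : IsTranspose p T e φ ψ) (r : R) (u : S) :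
    T (ψ (algebraMap R S (r * T u ^ (p ^ e - 1)) * u)) = T u * φ r := by
  have hpe : p ^ e - 1 + 1 = p ^ e := Nat.sub_add_cancel (Nat.one_le_pow _ _ hp.bot_lt)
  calc T (ψ (algebraMap R S (r * T u ^ (p ^ e - 1)) * u))
      = φ ((r * T u ^ (p ^ e - 1)) • T u) := by
        rw [← mul_one (ψ _), hψ, one_pow, mul_one, ← Algebra.smul_def, map_smul]
    _ = φ (T u ^ p ^ e • r) := by
        rw [smul_eq_mul, smul_eq_mul, mul_assoc, ← pow_succ, hpe, mul_comm]
    _ = T u * φ r := hφ _ _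

lemma comap_eq_of_mem_minimalPrimes_map [𝔭.IsPrime]
    (hrad : ∀ s, s ∈ (𝔭.map (algebraMap R S)).radical ↔ ∀ x, T (s * x) ∈ 𝔭)
    {𝔮 : Ideal S} (h𝔮 : 𝔮 ∈ (𝔭.map (algebraMap R S)).minimalPrimes) :
    𝔮.comap (algebraMap R S) = 𝔭 := by
  refine le_antisymm (fun r hr => ?_) (Ideal.map_le_iff_le_comap.mp h𝔮.le)
  rw [← Ideal.radical_minimalPrimes] at h𝔮
  obtain ⟨y, hy, hry⟩ := Ideal.exists_mul_mem_of_mem_minimalPrimes h𝔮 hr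
  obtain ⟨x, hx⟩ := not_forall.mp (mt (hrad y).mpr hy)
  have hrx : r * T (y * x) ∈ 𝔭 := by
    rw [← smul_eq_mul, ← map_smul, Algebra.smul_def, ← mul_assoc]
    exact (hrad _).mp hry x
  exact (Ideal.IsPrime.mem_or_mem ‹_› hrx).resolve_right hx

lemma exists_apply_notMem_of_map_ne_top
    (hrad : ∀ s, s ∈ (𝔭.map (algebraMap R S)).radical ↔ ∀ x, T (s * x) ∈ 𝔭)
    (h𝔭 : 𝔭.map (algebraMap R S) ≠ ⊤) : ∃ u, T u ∉ 𝔭 := by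
  by_contra! h
  refine h𝔭 (Ideal.radical_eq_top.mp ((Ideal.eq_top_iff_one _).mpr ((hrad 1).mpr fun x => ?_)))
  simpa using h x

end

theorem nondegenerate_iff_exists_prime_over_general
    (p : ℕ) (hp : p.Prime) (R S : Type*) [CommRing R] [CommRing S]
    [Algebra R S] [Module.Finite R S]
    (hinj : Function.Injective (algebraMap R S))
    (T : S →ₗ[R] R)
    (𝔭 : Ideal R) (h𝔭 : 𝔭.IsPrime)
    (hrad : ((Ideal.map (algebraMap R S) 𝔭).radical : Set S) =
      { s : S | ∀ x : S, T (s * x) ∈ 𝔭 })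
    (C : CartierStructure p R R) (tr : ℕ → (R →+ R) → (S →+ S))
    (htr : ∀ e, 1 ≤ e → ∀ φ ∈ C.carrier e,
      IsCartierMap p S e (tr e φ) ∧ IsTranspose p T e φ (tr e φ)) :
    (∃ e, 1 ≤ e ∧ ∃ φ ∈ C.carrier e, ∃ r : R, φ r ∉ 𝔭) ↔
      (∃ e, 1 ≤ e ∧ ∃ ψ ∈ pushFam C.carrier tr e, ∃ 𝔮 : Ideal S, 𝔮.IsPrime ∧
        𝔮.comap (algebraMap R S) = 𝔭 ∧ ∃ s : S, ψ s ∉ 𝔮) := by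
  have hradical : ∀ s, s ∈ (𝔭.map (algebraMap R S)).radical ↔ ∀ x, T (s * x) ∈ 𝔭 :=
    fun s => Set.ext_iff.mp hrad s
  constructor
  · rintro ⟨e, he, φ, hφ, r, hr⟩
    have h𝔭S : 𝔭.map (algebraMap R S) ≠ ⊤ :=
      (Ideal.map_eq_top_iff _ hinj (Algebra.IsIntegral.of_finite R S).isIntegral).not.mpr
        h𝔭.ne_top
    obtain ⟨u, hu⟩ := exists_apply_notMem_of_map_ne_top hradical h𝔭S
    set a := algebraMap R S (r * T u ^ (p ^ e - 1))
    have hau : tr e φ (a * u) ∉ (𝔭.map (algebraMap R S)).radical := fun h => by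
      have := (hradical _).mp h 1
      rw [mul_one, IsTranspose.apply_algebraMap_mul hp.ne_zero (C.cartier_mem e he φ hφ)
        (htr e he φ hφ).2] at this
      exact h𝔭.mul_notMem hu hr this
    obtain ⟨𝔮, h𝔮, hau𝔮⟩ := Ideal.exists_mem_minimalPrimes_notMem hau
    exact ⟨e, he, (tr e φ).comp (AddMonoidHom.mulLeft a), mem_pushFam_of_mem hφ a, 𝔮,
      h𝔮.1.1, comap_eq_of_mem_minimalPrimes_map hradical h𝔮, u, hau𝔮⟩
  · rintro ⟨e, he, ψ, hψ, 𝔮, h𝔮, h𝔮𝔭, s, hs⟩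
    by_contra! hC
    have h𝔭S𝔮 : 𝔭.map (algebraMap R S) ≤ 𝔮 := Ideal.map_le_iff_le_comap.mpr h𝔮𝔭.ge
    refine hs (h𝔮.radical_le_iff.mpr h𝔭S𝔮 ((hradical _).mpr fun x => ?_))
    exact apply_mul_mem_of_mem_pushFam (fun φ hφ => (htr e he φ hφ).2) (hC e he) hψ s x

/-- **Transformation rule for non-degeneracy along a center of F-purity:** `(R,C)` is
non-degenerate with respect to `𝔭` iff `(S, f^*C)` is non-degenerate with respect to at
least one prime `𝔮` lying over `𝔭`. -/
theorem nondegenerate_iff_exists_prime_over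
    (p : ℕ) (hp : p.Prime) (R S : Type*) [CommRing R] [CommRing S]
    [IsDomain R] [IsDomain S] [IsNoetherianRing R] [IsNoetherianRing S]
    [CharP R p] [CharP S p] [Algebra R S] [Module.Finite R S]
    (hinj : Function.Injective (algebraMap R S))
    (hFfR : letI := frobModule p hp R; Module.Finite R (FrobMod R))
    (hFfS : letI := frobModule p hp S; Module.Finite S (FrobMod S))
    (T : S →ₗ[R] R)
    (hσinj : Function.Injective ⇑(sigmaT R S T))
    (K : Type*) [Field K] [Algebra R K] [IsFractionRing R K]
    (hσgen : Function.Bijective ⇑(LinearMap.baseChange K (sigmaT R S T)))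
    (𝔭 : Ideal R) (h𝔭 : 𝔭.IsPrime)
    (hrad : ((Ideal.map (algebraMap R S) 𝔭).radical : Set S) =
      { s : S | ∀ x : S, T (s * x) ∈ 𝔭 })
    (C : CartierStructure p R R) (tr : ℕ → (R →+ R) → (S →+ S))
    (htr : ∀ e, 1 ≤ e → ∀ φ ∈ C.carrier e,
      IsCartierMap p S e (tr e φ) ∧ IsTranspose p T e φ (tr e φ))
    (hcompat : ∀ e, 1 ≤ e → ∀ φ ∈ C.carrier e, ∀ a ∈ 𝔭, φ a ∈ 𝔭) :
    (∃ e, 1 ≤ e ∧ ∃ φ ∈ C.carrier e, ∃ r : R, φ r ∉ 𝔭) ↔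
      (∃ e, 1 ≤ e ∧ ∃ ψ ∈ pushFam C.carrier tr e, ∃ 𝔮 : Ideal S, 𝔮.IsPrime ∧
        𝔮.comap (algebraMap R S) = 𝔭 ∧ ∃ s : S, ψ s ∉ 𝔮) :=
  nondegenerate_iff_exists_prime_over_general p hp R S hinj T 𝔭 h𝔭 hrad C tr htr
end

section
/- Fix a prime p. Let R ⊆ S be a finite extension of commutative rings of characteristic p and let T : S → R be an R-linear map such that σ : S → Hom_R(S,R), σ(s)(x) := T(s·x), is injective. Suppose T commutes with the Frobenius, i.e. T(s^p) = T(s)^p for all s ∈ S. Then for every e ≥ 1, every φ ∈ C_{e,R}, and every T-transpose φ^⊤ of φ, one has φ^⊤(r) = φ(r) for all r ∈ R; that is, φ^⊤ extends φ. -/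
/-- If `T` commutes with Frobenius then any `T`-transpose `φ^⊤` extends `φ`. -/
theorem transpose_extends_of_commutes_with_frobenius
    (p : ℕ) (hp : p.Prime) (R S : Type*) [CommRing R] [CommRing S]
    [CharP R p] [CharP S p] [Algebra R S] [Module.Finite R S]
    (hinj : Function.Injective (algebraMap R S)) (T : S →ₗ[R] R)
    (hσinj : Function.Injective ⇑(sigmaT R S T))
    (hTF : ∀ s : S, T (s ^ p) = T s ^ p)
    (e : ℕ) (he : 1 ≤ e) (φ : R →+ R) (hφ : IsCartierMap p R e φ)
    (ψ : S →+ S) (hψ : IsCartierMap p S e ψ) (hψt : IsTranspose p T e φ ψ) :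
    ∀ r : R, ψ (algebraMap R S r) = algebraMap R S (φ r) := by
  have hTFe : ∀ (n : ℕ) (s : S), T (s ^ p ^ n) = T s ^ p ^ n := by
    intro n
    induction n with
    | zero => simp
    | succ m ih => intro s; rw [pow_succ, pow_mul, hTF, ih, ← pow_mul, ← pow_succ]
  intro r
  apply hσinj
  apply LinearMap.ext
  intro s'
  show T (ψ (algebraMap R S r) * s') = T (algebraMap R S (φ r) * s')
  rw [hψt]
  have h1 : algebraMap R S r * s' ^ p ^ e = r • s' ^ p ^ e := (Algebra.smul_def r _).symm
  have h2 : algebraMap R S (φ r) * s' = φ r • s' := (Algebra.smul_def _ _).symm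
  rw [h1, h2, T.map_smul, T.map_smul, smul_eq_mul, smul_eq_mul, hTFe, mul_comm r]
  have := hφ (T s') r
  rw [smul_eq_mul, smul_eq_mul] at this
  rw [this, mul_comm]
end

section
/- Work in the polynomial ring P := 𝔽₂[x,y,z,u,v] over the field with two elements. Set ε := y³ + u·v ∈ 𝔽₂[y,z,u,v] and f := x³ + y·z·x + ε = x³ + y³ + x·y·z + u·v ∈ P. Define sequences b_e, c_e ∈ 𝔽₂[y,z,u,v] for e ≥ 1 by b₁ = 1, c₁ = 0, b_{e+1} = y·z·b_e² + c_e², and c_{e+1} = ε·b_e². Then for every e ≥ 1, the polynomial f divides x^{2^e − 1} − (b_e·x + c_e) in P; moreover, b_e ≡ (y·z)^{2^{e−1} − 1} modulo the ideal generated by ε in 𝔽₂[y,z,u,v]. -/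
open Polynomial

/-- `y` in `𝔽₂[y,z,u,v]`. -/
noncomputable def yP : MvPolynomial (Fin 4) (ZMod 2) := MvPolynomial.X 0
/-- `z` in `𝔽₂[y,z,u,v]`. -/
noncomputable def zP : MvPolynomial (Fin 4) (ZMod 2) := MvPolynomial.X 1
/-- `u` in `𝔽₂[y,z,u,v]`. -/
noncomputable def uP : MvPolynomial (Fin 4) (ZMod 2) := MvPolynomial.X 2
/-- `v` in `𝔽₂[y,z,u,v]`. -/
noncomputable def vP : MvPolynomial (Fin 4) (ZMod 2) := MvPolynomial.X 3
/-- `ε = y³ + u·v`. -/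
noncomputable def epsP : MvPolynomial (Fin 4) (ZMod 2) := yP ^ 3 + uP * vP
/-- `f = x³ + y·z·x + ε ∈ 𝔽₂[y,z,u,v][x] = 𝔽₂[x,y,z,u,v]`. -/
noncomputable def fP : Polynomial (MvPolynomial (Fin 4) (ZMod 2)) :=
  X ^ 3 + C (yP * zP) * X + C epsP

/-- Auxiliary: `a^(2k+1) = (a^k)² · a`. -/
lemma pow_two_mul_add_one' {R : Type*} [Monoid R] (a : R) (k : ℕ) :
    a ^ (2 * k + 1) = (a ^ k) ^ 2 * a := by
  rw [pow_succ, mul_comm 2 k, pow_mul]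

/-- The recursively defined `b_e, c_e` satisfy
`f ∣ x^{2^e−1} − (b_e·x + c_e)` and `b_e ≡ (y·z)^{2^{e−1}−1} mod (ε)`. -/
theorem powers_of_x_mod_f
    (b c : ℕ → MvPolynomial (Fin 4) (ZMod 2))
    (hb1 : b 1 = 1) (hc1 : c 1 = 0)
    (hb : ∀ e, 1 ≤ e → b (e + 1) = yP * zP * b e ^ 2 + c e ^ 2)
    (hc : ∀ e, 1 ≤ e → c (e + 1) = epsP * b e ^ 2) :
    ∀ e, 1 ≤ e →
      fP ∣ X ^ (2 ^ e - 1) - (C (b e) * X + C (c e)) ∧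
      b e - (yP * zP) ^ (2 ^ (e - 1) - 1) ∈ Ideal.span {epsP} := by
  have h2 : (2 : Polynomial (MvPolynomial (Fin 4) (ZMod 2))) = 0 := CharTwo.two_eq_zero
  have heps : ∀ x : MvPolynomial (Fin 4) (ZMod 2), x ∈ Ideal.span {epsP} ↔ epsP ∣ x :=
    fun x => Ideal.mem_span_singleton
  have hcspan : ∀ e, 1 ≤ e → epsP ∣ c e := by
    intro e he
    match e, he with
    | 1, _ => rw [hc1]; exact dvd_zero _
    | (n+2), _ =>
      rw [hc (n+1) (by omega)]
      exact Dvd.intro _ rfl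
  intro e he
  induction e, he using Nat.le_induction with
  | base =>
    constructor
    · rw [hb1, hc1]; simp
    · rw [hb1]; simp
  | succ n hn ih =>
    obtain ⟨⟨q, hq⟩, ihb⟩ := ih
    have hpow : 1 ≤ 2 ^ n := Nat.one_le_two_pow
    have hpow' : 1 ≤ 2 ^ (n - 1) := Nat.one_le_two_pow
    have hn1 : n - 1 + 1 = n := by omega
    have he1 : 2 ^ (n + 1) - 1 = 2 * (2 ^ n - 1) + 1 := by
      have : 2 ^ (n + 1) = 2 * 2 ^ n := by rw [pow_succ]; ring
      omega
    have he2 : 2 ^ n - 1 = 2 * (2 ^ (n - 1) - 1) + 1 := by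
      have : 2 ^ n = 2 ^ (n - 1) * 2 := by rw [← pow_succ, hn1]
      omega
    constructor
    · refine ⟨X * q * (X ^ (2 ^ n - 1) + (C (b n) * X + C (c n))) + C (b n) ^ 2, ?_⟩
      have hX : (X : Polynomial (MvPolynomial (Fin 4) (ZMod 2))) ^ (2 ^ (n + 1) - 1)
          = (X ^ (2 ^ n - 1)) ^ 2 * X := by rw [he1, pow_two_mul_add_one']
      rw [hX, hb n hn, hc n hn]
      have hq' : X ^ (2 ^ n - 1) - (C (b n) * X + C (c n)) = fP * q := hq
      simp only [fP, epsP, map_add, map_mul, map_pow] at hq' ⊢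
      linear_combination (X * (X ^ (2 ^ n - 1) + (C (b n) * X + C (c n)))) * hq' +
        (C (b n) * C (c n) * X ^ 2 - C yP * C zP * C (b n) ^ 2 * X
          - (C yP ^ 3 + C uP * C vP) * C (b n) ^ 2) * h2
    · rw [heps] at ihb ⊢
      simp only [Nat.add_sub_cancel]
      rw [hb n hn, he2]
      have hcd := hcspan n hn
      have key : yP * zP * b n ^ 2 + c n ^ 2 - (yP * zP) ^ (2 * (2 ^ (n - 1) - 1) + 1)
          = yP * zP * (b n + (yP * zP) ^ (2 ^ (n - 1) - 1)) *
              (b n - (yP * zP) ^ (2 ^ (n - 1) - 1)) + c n * c n := by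
        rw [pow_two_mul_add_one']
        ring
      rw [key]
      exact dvd_add (Dvd.dvd.mul_left ihb _) (Dvd.dvd.mul_left hcd _)
end

section
/- Let k be a field and d, n ≥ 1 integers. In the multivariate power series ring P := k[[x₁,…,x_n]], let V (the d-th Veronese subring) be the k-subalgebra consisting of all power series whose support contains only monomials of total degree divisible by d, and let A ⊆ V be the k-subalgebra consisting of all power series whose support contains only monomials x^ν with every exponent ν_i divisible by d (so A = k[[x₁^d,…,x_n^d]]). Then V is a free A-module with basis the monomials { x₁^{ν₁}⋯x_n^{ν_n} : 0 ≤ ν_i ≤ d−1 for all i, and d divides ν₁+⋯+ν_n }. -/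
open MvPowerSeries

/-- The subalgebra `A = k[[x₁^d, …, x_n^d]]` of power series supported on monomials all
of whose exponents are divisible by `d`. -/
noncomputable def dPowerSub (k : Type*) [Field k] (d n : ℕ) :
    Subalgebra k (MvPowerSeries (Fin n) k) where
  carrier := { F | ∀ ν : Fin n →₀ ℕ, ¬ (∀ i, d ∣ ν i) → MvPowerSeries.coeff ν F = 0 }
  zero_mem' := by intro ν _; simp
  add_mem' := by
    intro a b ha hb ν hν
    rw [map_add, ha ν hν, hb ν hν, add_zero]
  one_mem' := by
    intro ν hν
    rw [MvPowerSeries.coeff_one, if_neg]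
    rintro rfl
    exact hν fun i => by simp
  mul_mem' := by
    intro a b ha hb ν hν
    classical
    rw [MvPowerSeries.coeff_mul]
    apply Finset.sum_eq_zero
    rintro ⟨ν₁, ν₂⟩ hmem
    rw [Finset.HasAntidiagonal.mem_antidiagonal] at hmem
    by_cases h1 : ∀ i, d ∣ ν₁ i
    · have h2 : ¬ ∀ i, d ∣ ν₂ i := by
        intro h2
        exact hν fun i => by
          have : ν i = ν₁ i + ν₂ i := by rw [← hmem]; rfl
          rw [this]; exact dvd_add (h1 i) (h2 i)
      rw [hb ν₂ h2, mul_zero]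
    · rw [ha ν₁ h1, zero_mul]
  algebraMap_mem' := by
    intro r ν hν
    have : (algebraMap k (MvPowerSeries (Fin n) k) r) = MvPowerSeries.C (σ := Fin n) (R := k) r := rfl
    rw [this, MvPowerSeries.coeff_C, if_neg]
    rintro rfl
    exact hν fun i => by simp

/-- The `d`-th Veronese `V`, the power series supported on monomials of total degree
divisible by `d`, as a module over `A = dPowerSub k d n`. -/
noncomputable def veroneseMod (k : Type*) [Field k] (d n : ℕ) :
    Submodule ↥(dPowerSub k d n) (MvPowerSeries (Fin n) k) where
  carrier := { F | ∀ ν : Fin n →₀ ℕ, ¬ (d ∣ ∑ i, ν i) → MvPowerSeries.coeff ν F = 0 }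
  zero_mem' := by intro ν _; simp
  add_mem' := by
    intro a b ha hb ν hν
    rw [map_add, ha ν hν, hb ν hν, add_zero]
  smul_mem' := by
    intro c F hF ν hν
    classical
    have hc : (c • F) = (c : MvPowerSeries (Fin n) k) * F := rfl
    rw [hc, MvPowerSeries.coeff_mul]
    apply Finset.sum_eq_zero
    rintro ⟨ν₁, ν₂⟩ hmem
    rw [Finset.HasAntidiagonal.mem_antidiagonal] at hmem
    by_cases h1 : ∀ i, d ∣ ν₁ i
    · have h2 : ¬ d ∣ ∑ i, ν₂ i := by
        intro h2
        apply hν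
        have : ∑ i, ν i = (∑ i, ν₁ i) + ∑ i, ν₂ i := by
          rw [← hmem]
          rw [← Finset.sum_add_distrib]
          rfl
        rw [this]
        exact dvd_add (Finset.dvd_sum fun i _ => h1 i) h2
      rw [hF ν₂ h2, mul_zero]
    · rw [c.2 ν₁ h1, zero_mul]

/-!
Every exponent vector splits uniquely as `ν = μ + ρ` with `μ ∈ dℕⁿ` and `0 ≤ ρᵢ < d`
(namely `ρ = ν mod d`), and `|ν| ≡ |ρ| mod d`. Hence `P = ⨁_ρ A·x^ρ`, where the
coefficient of `x^ρ` in `F` is the series `Σ_{μ ∈ dℕⁿ} F_{μ+ρ} x^μ ∈ A`, and `F` lies in `V`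
exactly when these coefficients vanish for `d ∤ |ρ|`.
-/

namespace Finsupp

variable {σ : Type*}

noncomputable def modNat (ν : σ →₀ ℕ) (d : ℕ) : σ →₀ ℕ :=
  ν.mapRange (· % d) (Nat.zero_mod d)

@[simp]
lemma modNat_apply (ν : σ →₀ ℕ) (d : ℕ) (i : σ) : ν.modNat d i = ν i % d :=
  mapRange_apply ..

lemma modNat_le (ν : σ →₀ ℕ) (d : ℕ) : ν.modNat d ≤ ν :=
  fun i => by simpa using Nat.mod_le (ν i) d

lemma dvd_sub_modNat_apply (ν : σ →₀ ℕ) (d : ℕ) (i : σ) : d ∣ (ν - ν.modNat d) i := by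
  simpa using Nat.dvd_sub_mod (ν i)

lemma le_and_dvd_sub_iff_eq_modNat {d : ℕ} {ρ : σ →₀ ℕ} (hρ : ∀ i, ρ i < d) (ν : σ →₀ ℕ) :
    (ρ ≤ ν ∧ ∀ i, d ∣ (ν - ρ) i) ↔ ρ = ν.modNat d := by
  refine ⟨fun ⟨hle, hdvd⟩ => ?_, fun h => h ▸ ⟨modNat_le ν d, dvd_sub_modNat_apply ν d⟩⟩
  ext i
  have hmod : ρ i ≡ ν i [MOD d] := (Nat.modEq_iff_dvd' (hle i)).2 (by simpa using hdvd i)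
  simpa using (Nat.mod_eq_of_modEq hmod.symm (hρ i)).symm

lemma modNat_add_of_dvd {d : ℕ} {μ ρ : σ →₀ ℕ} (hμ : ∀ i, d ∣ μ i) (hρ : ∀ i, ρ i < d) :
    (μ + ρ).modNat d = ρ :=
  ((le_and_dvd_sub_iff_eq_modNat hρ _).1 ⟨le_add_self, by simpa using hμ⟩).symm

instance finite_subtype_forall_lt [Finite σ] (d : ℕ) : Finite {ρ : σ →₀ ℕ // ∀ i, ρ i < d} :=
  Finite.of_injective (fun ρ i => (⟨ρ.1 i, ρ.2 i⟩ : Fin d))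
    fun _ _ h => Subtype.ext <| Finsupp.ext fun i => congrArg Fin.val (congrFun h i)

end Finsupp

namespace MvPowerSeries

variable {σ R : Type*} [CommSemiring R] {d : ℕ}

lemma coeff_mul_monomial_one_of_dvd [DecidableEq σ] {a : MvPowerSeries σ R}
    (ha : ∀ μ : σ →₀ ℕ, ¬ (∀ i, d ∣ μ i) → coeff μ a = 0)
    {ρ : σ →₀ ℕ} (hρ : ∀ i, ρ i < d) (ν : σ →₀ ℕ) :
    coeff ν (a * monomial ρ 1) = if ρ = ν.modNat d then coeff (ν - ρ) a else 0 := by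
  rw [coeff_mul_monomial, mul_one]
  by_cases h : ρ = ν.modNat d
  · rw [if_pos (h ▸ ν.modNat_le d), if_pos h]
  · rw [if_neg h]
    split_ifs with hle
    · exact ha _ fun hdvd => h ((Finsupp.le_and_dvd_sub_iff_eq_modNat hρ ν).1 ⟨hle, hdvd⟩)
    · rfl

open scoped Classical in
noncomputable def dPowerComponent (d : ℕ) (ρ : σ →₀ ℕ) (F : MvPowerSeries σ R) : MvPowerSeries σ R :=
  fun μ => if ∀ i, d ∣ μ i then coeff (μ + ρ) F else 0

open scoped Classical in
lemma coeff_dPowerComponent (ρ μ : σ →₀ ℕ) (F : MvPowerSeries σ R) :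
    coeff μ (dPowerComponent d ρ F) = if ∀ i, d ∣ μ i then coeff (μ + ρ) F else 0 :=
  rfl

lemma coeff_dPowerComponent_of_not_dvd (ρ : σ →₀ ℕ) (F : MvPowerSeries σ R) (μ : σ →₀ ℕ)
    (hμ : ¬ ∀ i, d ∣ μ i) : coeff μ (dPowerComponent d ρ F) = 0 := by
  classical
  rw [coeff_dPowerComponent, if_neg hμ]

lemma sum_dPowerComponent_mul_monomial (hd : 0 < d) (F : MvPowerSeries σ R)
    [Fintype {ρ : σ →₀ ℕ // ∀ i, ρ i < d}] :
    ∑ ρ : {ρ : σ →₀ ℕ // ∀ i, ρ i < d}, dPowerComponent d ρ F * monomial ρ.1 1 = F := by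
  classical
  ext ν
  have hν : ∀ i, ν.modNat d i < d := fun i => by simpa using Nat.mod_lt _ hd
  rw [map_sum, Fintype.sum_eq_single ⟨ν.modNat d, hν⟩]
  · rw [coeff_mul_monomial_one_of_dvd (coeff_dPowerComponent_of_not_dvd _ F) hν, if_pos rfl,
      coeff_dPowerComponent, if_pos (ν.dvd_sub_modNat_apply d),
      tsub_add_cancel_of_le (ν.modNat_le d)]
  · intro ρ hρ
    rw [coeff_mul_monomial_one_of_dvd (coeff_dPowerComponent_of_not_dvd _ F) ρ.2,
      if_neg fun h => hρ (Subtype.ext h)]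

lemma dPowerComponent_eq_zero [Fintype σ] {F : MvPowerSeries σ R}
    (hF : ∀ ν : σ →₀ ℕ, ¬ d ∣ ∑ i, ν i → coeff ν F = 0)
    {ρ : σ →₀ ℕ} (hρ : ¬ d ∣ ∑ i, ρ i) : dPowerComponent d ρ F = 0 := by
  ext μ
  rw [coeff_dPowerComponent, map_zero]
  split_ifs with hμ
  · refine hF _ fun h => hρ ?_
    simp only [Finsupp.add_apply, Finset.sum_add_distrib] at h
    exact (Nat.dvd_add_right (Finset.dvd_sum fun i _ => hμ i)).1 h
  · rfl

end MvPowerSeries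

section Veronese

variable (k : Type*) [Field k] (d n : ℕ)

lemma dPowerComponent_mem_dPowerSub (ρ : Fin n →₀ ℕ) (F : MvPowerSeries (Fin n) k) :
    dPowerComponent d ρ F ∈ dPowerSub k d n :=
  coeff_dPowerComponent_of_not_dvd ρ F

lemma monomial_mem_veroneseMod {ρ : Fin n →₀ ℕ} (hρ : d ∣ ∑ i, ρ i) :
    monomial ρ (1 : k) ∈ veroneseMod k d n := by
  intro ν hν
  rw [coeff_monomial, if_neg]
  rintro rfl
  exact hν hρ

lemma linearIndependent_monomial_dPowerSub :
    LinearIndependent (dPowerSub k d n)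
      (fun ρ : {ρ : Fin n →₀ ℕ // ∀ i, ρ i < d} => monomial ρ.1 (1 : k)) := by
  rw [linearIndependent_iff']
  intro s g hsum ρ₀ hρ₀
  ext μ
  by_cases hμ : ∀ i, d ∣ μ i
  · have hcoeff := congrArg (coeff (μ + ρ₀.1)) hsum
    have hcoeff_smul (ρ : {ρ : Fin n →₀ ℕ // ∀ i, ρ i < d}) :
        coeff (μ + ρ₀.1) (g ρ • monomial ρ.1 (1 : k)) =
          if ρ = ρ₀ then coeff (μ + ρ₀.1 - ρ.1) (g ρ : MvPowerSeries (Fin n) k) else 0 := by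
      rw [Subalgebra.smul_def, smul_eq_mul, coeff_mul_monomial_one_of_dvd (g ρ).2 ρ.2,
        Finsupp.modNat_add_of_dvd hμ ρ₀.2]
      exact if_congr Subtype.ext_iff.symm rfl rfl
    simp only [map_sum, map_zero, hcoeff_smul, Finset.sum_ite_eq', if_pos hρ₀,
      add_tsub_cancel_right] at hcoeff
    simpa using hcoeff
  · simpa using (g ρ₀).2 μ hμ

lemma span_monomial_eq_veroneseMod (hd : 1 ≤ d) :
    Submodule.span (dPowerSub k d n)
        (Set.range (fun ν : { ν : Fin n →₀ ℕ // (∀ i, ν i ≤ d - 1) ∧ d ∣ ∑ i, ν i } =>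
          monomial ν.1 (1 : k))) = veroneseMod k d n := by
  refine le_antisymm (Submodule.span_le.2 ?_) fun F hF => ?_
  · rintro _ ⟨ρ, rfl⟩
    exact monomial_mem_veroneseMod k d n ρ.2.2
  · have := Fintype.ofFinite {ρ : Fin n →₀ ℕ // ∀ i, ρ i < d}
    rw [← sum_dPowerComponent_mul_monomial hd F]
    refine Submodule.sum_mem _ fun ρ _ => ?_
    by_cases hρ : d ∣ ∑ i, ρ.1 i
    · exact Submodule.smul_mem _
        (⟨_, dPowerComponent_mem_dPowerSub k d n ρ F⟩ : dPowerSub k d n)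
        (Submodule.subset_span ⟨⟨ρ.1, fun i => Nat.le_sub_one_of_lt (ρ.2 i), hρ⟩, rfl⟩)
    · rw [dPowerComponent_eq_zero hF hρ, zero_mul]
      exact zero_mem _

end Veronese

theorem veronese_free_over_dPower_general
    (k : Type*) [Field k] (d n : ℕ) (hd : 1 ≤ d) :
    LinearIndependent ↥(dPowerSub k d n)
      (fun ν : { ν : Fin n →₀ ℕ // (∀ i, ν i ≤ d - 1) ∧ d ∣ ∑ i, ν i } =>
        MvPowerSeries.monomial ν.1 (1 : k)) ∧
    Submodule.span ↥(dPowerSub k d n)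
        (Set.range (fun ν : { ν : Fin n →₀ ℕ // (∀ i, ν i ≤ d - 1) ∧ d ∣ ∑ i, ν i } =>
          MvPowerSeries.monomial ν.1 (1 : k))) = veroneseMod k d n := by
  refine ⟨?_, span_monomial_eq_veroneseMod k d n hd⟩
  have hlt (ν : Fin n →₀ ℕ) (hν : (∀ i, ν i ≤ d - 1) ∧ d ∣ ∑ i, ν i) (i : Fin n) : ν i < d :=
    Nat.lt_of_le_sub_one hd (hν.1 i)
  exact (linearIndependent_monomial_dPowerSub k d n).comp (Subtype.map id hlt)
    (Subtype.map_injective hlt Function.injective_id)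

/-- **The Veronese subring is free over `k[[x₁^d,…,x_n^d]]`** with basis the monomials
`x^ν` with all `νᵢ ≤ d−1` and `d ∣ ν₁+⋯+ν_n`: the family is `A`-linearly independent and
`A`-spans `V`. -/
theorem veronese_free_over_dPower
    (k : Type*) [Field k] (d n : ℕ) (hd : 1 ≤ d) (hn : 1 ≤ n) :
    LinearIndependent ↥(dPowerSub k d n)
      (fun ν : { ν : Fin n →₀ ℕ // (∀ i, ν i ≤ d - 1) ∧ d ∣ ∑ i, ν i } =>
        MvPowerSeries.monomial ν.1 (1 : k)) ∧
    Submodule.span ↥(dPowerSub k d n)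
        (Set.range (fun ν : { ν : Fin n →₀ ℕ // (∀ i, ν i ≤ d - 1) ∧ d ∣ ∑ i, ν i } =>
          MvPowerSeries.monomial ν.1 (1 : k))) = veroneseMod k d n :=
  veronese_free_over_dPower_general k d n hd
end

section
/- Fix a prime p. Let R ⊆ S be a finite extension of F-finite noetherian commutative domains of characteristic p, and let T : S → R be an R-linear map such that σ is injective and a generic isomorphism. Let 𝔭 ⊊ R be a prime ideal with √(𝔭S) = { s ∈ S : T(s·x) ∈ 𝔭 for all x ∈ S }, and let 𝔮 be a prime ideal of S with 𝔮 ∩ R = 𝔭. Let C be a Cartier subalgebra of C_R such that every φ ∈ C_e has a chosen T-transpose φ^⊤ and φ(𝔭) ⊆ 𝔭 for all e ≥ 1, φ ∈ C_e. Assume that the adjoint ideal τ_𝔭(R,C) exists, i.e. the set of ideals I of R with φ(I) ⊆ I for all e ≥ 1 and φ ∈ C_e and with I ⊄ 𝔭 has a least element with respect to inclusion, and that the adjoint ideal τ_𝔮(S,f*C) exists, i.e. the set of ideals J of S with ψ(J) ⊆ J for all e ≥ 1 and ψ ∈ (f*C)_e and with J ⊄ 𝔮 has a least element. Then { T(x)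 : x ∈ τ_𝔮(S,f*C) } = τ_𝔭(R,C). -/
/-- **Transformation rule for adjoint ideals (test ideals along closed subschemes) under
finite covers:** `T(τ_𝔮(S, f^*C)) = τ_𝔭(R, C)`. -/
theorem trace_adjointIdeal
    (p : ℕ) (hp : p.Prime) (R S : Type*) [CommRing R] [CommRing S]
    [IsDomain R] [IsDomain S] [IsNoetherianRing R] [IsNoetherianRing S]
    [CharP R p] [CharP S p] [Algebra R S] [Module.Finite R S]
    (hinj : Function.Injective (algebraMap R S))
    (hFfR : letI := frobModule p hp R; Module.Finite R (FrobMod R))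
    (hFfS : letI := frobModule p hp S; Module.Finite S (FrobMod S))
    (T : S →ₗ[R] R)
    (hσinj : Function.Injective ⇑(sigmaT R S T))
    (K : Type*) [Field K] [Algebra R K] [IsFractionRing R K]
    (hσgen : Function.Bijective ⇑(LinearMap.baseChange K (sigmaT R S T)))
    (𝔭 : Ideal R) (h𝔭 : 𝔭.IsPrime)
    (hrad : ((Ideal.map (algebraMap R S) 𝔭).radical : Set S) =
      { s : S | ∀ x : S, T (s * x) ∈ 𝔭 })
    (𝔮 : Ideal S) (h𝔮 : 𝔮.IsPrime) (h𝔮𝔭 : 𝔮.comap (algebraMap R S) = 𝔭)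
    (C : CartierStructure p R R) (tr : ℕ → (R →+ R) → (S →+ S))
    (htr : ∀ e, 1 ≤ e → ∀ φ ∈ C.carrier e,
      IsCartierMap p S e (tr e φ) ∧ IsTranspose p T e φ (tr e φ))
    (hcompat : ∀ e, 1 ≤ e → ∀ φ ∈ C.carrier e, ∀ a ∈ 𝔭, φ a ∈ 𝔭)
    (τR : Ideal R)
    (hτR : IsLeast { I : Ideal R |
      (∀ e, 1 ≤ e → ∀ φ ∈ C.carrier e, ∀ a ∈ I, φ a ∈ I) ∧ ¬ I ≤ 𝔭 } τR)
    (τS : Ideal S)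
    (hτS : IsLeast { J : Ideal S |
      (∀ e, 1 ≤ e → ∀ ψ ∈ pushFam C.carrier tr e, ∀ b ∈ J, ψ b ∈ J) ∧ ¬ J ≤ 𝔮 } τS) :
    ⇑T '' (τS : Set S) = (τR : Set R) := by
  classical
  obtain ⟨c, hcτ, hc𝔭⟩ : ∃ c ∈ τR, c ∉ 𝔭 := SetLike.not_le_iff_exists.mp hτR.1.2
  -- The ideal J = { s | ∀ x, T (s * x) ∈ τR } of S.
  let J : Ideal S :=
    { carrier := { s : S | ∀ x : S, T (s * x) ∈ τR }
      add_mem' := fun {a b} ha hb x => by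
        rw [add_mul, map_add]; exact τR.add_mem (ha x) (hb x)
      zero_mem' := fun x => by rw [zero_mul, map_zero]; exact τR.zero_mem
      smul_mem' := fun cS s hs x => by
        rw [smul_eq_mul, mul_comm cS s, mul_assoc]; exact hs (cS * x) }
  have hJstab : ∀ e, 1 ≤ e → ∀ ψ ∈ pushFam C.carrier tr e, ∀ b ∈ J, ψ b ∈ J := by
    intro e he ψ hψ b hb x
    obtain ⟨k, φ, s, hφ, rfl⟩ := hψ
    show T ((∑ i, (tr e (φ i)).comp (AddMonoidHom.mulLeft (s i))) b * x) ∈ τR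
    rw [AddMonoidHom.finset_sum_apply, Finset.sum_mul, map_sum]
    refine τR.sum_mem fun i _ => ?_
    have htri := (htr e he (φ i) (hφ i)).2 (s i * b) x
    simp only [AddMonoidHom.comp_apply, AddMonoidHom.coe_mulLeft]
    rw [htri]
    have hrw : s i * b * x ^ p ^ e = b * (s i * x ^ p ^ e) := by ring
    rw [hrw]
    exact hτR.1.1 e he (φ i) (hφ i) _ (hb _)
  have hJ𝔮 : ¬ J ≤ 𝔮 := by
    intro hle
    have hcJ : algebraMap R S c ∈ J := fun x => by
      rw [← Algebra.smul_def, map_smul, smul_eq_mul]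
      exact τR.mul_mem_right _ hcτ
    exact hc𝔭 (h𝔮𝔭 ▸ (Ideal.mem_comap.mpr (hle hcJ)))
  have hτSJ : τS ≤ J := hτS.2 ⟨hJstab, hJ𝔮⟩
  -- The ideal I = T(τS) of R.
  let I : Ideal R := Submodule.map T (τS.restrictScalars R)
  have hIstab : ∀ e, 1 ≤ e → ∀ φ ∈ C.carrier e, ∀ a ∈ I, φ a ∈ I := by
    intro e he φ hφ a ha
    obtain ⟨b, hb, rfl⟩ := ha
    refine ⟨tr e φ b, ?_, ?_⟩
    · have hmem : tr e φ ∈ pushFam C.carrier tr e := by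
        refine ⟨1, fun _ => φ, fun _ => 1, fun _ => hφ, ?_⟩
        ext x
        simp
      exact hτS.1.1 e he _ hmem b hb
    · have := (htr e he φ hφ).2 b 1
      simpa using this
  have hI𝔭 : ¬ I ≤ 𝔭 := by
    intro hle
    apply hτS.1.2
    intro s hs
    have hrad' : s ∈ ((Ideal.map (algebraMap R S) 𝔭).radical : Set S) := by
      rw [hrad]
      exact fun x => hle ⟨s * x, τS.mul_mem_right x hs, rfl⟩
    have hmaple : Ideal.map (algebraMap R S) 𝔭 ≤ 𝔮 := by
      rw [← h𝔮𝔭]; exact Ideal.map_comap_le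
    have : (Ideal.map (algebraMap R S) 𝔭).radical ≤ 𝔮 := by
      rw [← h𝔮.radical]
      exact Ideal.radical_mono hmaple
    exact this hrad'
  have hτRI : τR ≤ I := hτR.2 ⟨hIstab, hI𝔭⟩
  ext a
  constructor
  · rintro ⟨b, hb, rfl⟩
    have := hτSJ hb 1
    simpa using this
  · intro ha
    obtain ⟨b, hb, rfl⟩ := hτRI ha
    exact ⟨b, hb, rfl⟩
end
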